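/- arXiv:2405.08692 — 3 statements merged into one kernel-verified Lean document; each statement's English description precedes it below -/
import Mathlib

section
/- Let U ⊆ Ω ⊆ ℂ be symmetric open sets with the following Runge property: for every function h holomorphic on U, every compact set C ⊆ U and every δ > 0 there exists a function holomorphic on Ω whose restriction to C is uniformly δ-close to h. Let K ⊆ U be a symmetric compact set, let f : U → ℂ be holomorphic and Schwarz symmetric, and let ε > 0. Then there exists a holomorphic Schwarz symmetric function g : Ω → ℂ such that sup_{z ∈ K} |f(z) − g(z)| < ε. -/
/-! Approximate `f` on `K` by some `H` holomorphic on `Ω` and replace `H` by the average of `H` and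
its reflection `conj ∘ H ∘ conj`. The average is Schwarz symmetric and still holomorphic on the
symmetric set `Ω`; since `f` is Schwarz symmetric and `K` symmetric, the reflection approximates
`f` on `K` as well as `H` does, hence so does the average. -/

open Set Filter Topology ComplexConjugate

theorem HasDerivWithinAt.conj_conj {H : ℂ → ℂ} {d z : ℂ} {s : Set ℂ}
    (h : HasDerivWithinAt H d s (conj z)) :
    HasDerivWithinAt (fun w => conj (H (conj w))) (conj d) (conj ⁻¹' s) z := by
  rw [hasDerivWithinAt_iff_tendsto_slope] at h ⊢
  have hconj : Tendsto conj (𝓝[conj ⁻¹' s \ {z}] z) (𝓝[s \ {conj z}] (conj z)) :=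
    tendsto_nhdsWithin_of_tendsto_nhds_of_eventually_within _
      ((Complex.continuous_conj.tendsto z).mono_left nhdsWithin_le_nhds)
      (eventually_nhdsWithin_of_forall fun w ⟨hws, hwz⟩ =>
        ⟨hws, fun hc => hwz (by simpa using congrArg conj hc)⟩)
  refine ((Complex.continuous_conj.tendsto d).comp (h.comp hconj)).congr fun w => ?_
  simp [slope_def_field]

theorem DifferentiableOn.conj_conj {H : ℂ → ℂ} {s : Set ℂ} (h : DifferentiableOn ℂ H s) :
    DifferentiableOn ℂ (fun w => conj (H (conj w))) (conj ⁻¹' s) := fun _ hz =>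
  ((h _ hz).hasDerivWithinAt.conj_conj).differentiableWithinAt

noncomputable def schwarzSymmetrization (H : ℂ → ℂ) (z : ℂ) : ℂ :=
  (H z + conj (H (conj z))) / 2

theorem schwarzSymmetrization_conj (H : ℂ → ℂ) (z : ℂ) :
    schwarzSymmetrization H (conj z) = conj (schwarzSymmetrization H z) := by
  simp only [schwarzSymmetrization, Complex.conj_conj, map_div₀, map_add, map_ofNat]
  ring

theorem DifferentiableOn.schwarzSymmetrization {H : ℂ → ℂ} {s : Set ℂ}
    (h : DifferentiableOn ℂ H s) (hs : MapsTo conj s s) :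
    DifferentiableOn ℂ (schwarzSymmetrization H) s :=
  (h.add (h.conj_conj.mono hs)).div_const 2

theorem norm_sub_schwarzSymmetrization_le {f : ℂ → ℂ} {z : ℂ} (hf : f (conj z) = conj (f z))
    (H : ℂ → ℂ) :
    ‖f z - schwarzSymmetrization H z‖ ≤ (‖f z - H z‖ + ‖f (conj z) - H (conj z)‖) / 2 := by
  have hsplit : f z - schwarzSymmetrization H z =
      ((f z - H z) + conj (f (conj z) - H (conj z))) / 2 := by
    rw [map_sub, hf, Complex.conj_conj, schwarzSymmetrization]
    ring
  rw [hsplit, norm_div, Complex.norm_ofNat, ← RCLike.norm_conj (f (conj z) - H (conj z))]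
  gcongr
  exact norm_add_le _ _

theorem symmetric_runge_approximation_general (U Ω : Set ℂ)
    (hΩsym : (starRingEnd ℂ) '' Ω = Ω)
    (hRunge : ∀ h : ℂ → ℂ, DifferentiableOn ℂ h U →
      ∀ C : Set ℂ, IsCompact C → C ⊆ U → ∀ δ : ℝ, 0 < δ →
        ∃ H : ℂ → ℂ, DifferentiableOn ℂ H Ω ∧ ∀ z ∈ C, ‖h z - H z‖ ≤ δ)
    (K : Set ℂ) (hK : IsCompact K) (hKU : K ⊆ U) (hKsym : (starRingEnd ℂ) '' K = K)
    (f : ℂ → ℂ) (hf : DifferentiableOn ℂ f U)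
    (hfsym : ∀ z ∈ U, f ((starRingEnd ℂ) z) = (starRingEnd ℂ) (f z))
    (ε : ℝ) (hε : 0 < ε) :
    ∃ g : ℂ → ℂ, DifferentiableOn ℂ g Ω ∧
      (∀ z ∈ Ω, g ((starRingEnd ℂ) z) = (starRingEnd ℂ) (g z)) ∧
      ∀ z ∈ K, ‖f z - g z‖ < ε := by
  obtain ⟨H, hHΩ, hHK⟩ := hRunge f hf K hK hKU (ε / 2) (by positivity)
  have hΩconj : MapsTo conj Ω Ω := (mapsTo_image _ _).mono_right hΩsym.subset
  have hKconj : MapsTo conj K K := (mapsTo_image _ _).mono_right hKsym.subset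
  refine ⟨schwarzSymmetrization H, hHΩ.schwarzSymmetrization hΩconj,
    fun z _ => schwarzSymmetrization_conj H z, fun z hz => ?_⟩
  calc ‖f z - schwarzSymmetrization H z‖
      ≤ (‖f z - H z‖ + ‖f (conj z) - H (conj z)‖) / 2 :=
        norm_sub_schwarzSymmetrization_le (hfsym z (hKU hz)) H
    _ ≤ (ε / 2 + ε / 2) / 2 := by gcongr; exacts [hHK z hz, hHK _ (hKconj hz)]
    _ < ε := by linarith

/-- Symmetric Runge approximation: if `U ⊆ Ω` are symmetric open subsets of `ℂ` such
that holomorphic functions on `U` can be approximated uniformly on compacts by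
holomorphic functions on `Ω`, then Schwarz symmetric holomorphic functions on `U`
can be approximated uniformly on symmetric compact sets by Schwarz symmetric
holomorphic functions on `Ω`. -/
theorem symmetric_runge_approximation (U Ω : Set ℂ)
    (hUopen : IsOpen U) (hΩopen : IsOpen Ω) (hUΩ : U ⊆ Ω)
    (hUsym : (starRingEnd ℂ) '' U = U) (hΩsym : (starRingEnd ℂ) '' Ω = Ω)
    (hRunge : ∀ h : ℂ → ℂ, DifferentiableOn ℂ h U →
      ∀ C : Set ℂ, IsCompact C → C ⊆ U → ∀ δ : ℝ, 0 < δ →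
        ∃ H : ℂ → ℂ, DifferentiableOn ℂ H Ω ∧ ∀ z ∈ C, ‖h z - H z‖ ≤ δ)
    (K : Set ℂ) (hK : IsCompact K) (hKU : K ⊆ U) (hKsym : (starRingEnd ℂ) '' K = K)
    (f : ℂ → ℂ) (hf : DifferentiableOn ℂ f U)
    (hfsym : ∀ z ∈ U, f ((starRingEnd ℂ) z) = (starRingEnd ℂ) (f z))
    (ε : ℝ) (hε : 0 < ε) :
    ∃ g : ℂ → ℂ, DifferentiableOn ℂ g Ω ∧
      (∀ z ∈ Ω, g ((starRingEnd ℂ) z) = (starRingEnd ℂ) (g z)) ∧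
      ∀ z ∈ K, ‖f z - g z‖ < ε :=
  symmetric_runge_approximation_general U Ω hΩsym hRunge K hK hKU hKsym f hf hfsym ε hε
end

section
/- Let D ⊆ ℂ be a nonempty symmetric open set and let 𝒰 be a symmetric open covering of D. Then there exists a symmetric open covering 𝒱 of D refining 𝒰 (every member of 𝒱 is contained in some member of 𝒰) such that no four pairwise distinct members of 𝒱 have a common point. -/
open Set

namespace SymRefAux

noncomputable section

/-! ### The scale function `rad` -/

/-- The set of admissible radii at `z`. -/
def radSet (𝒰 : Set (Set ℂ)) (z : ℂ) : Set ℝ :=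
  {t | t ≤ 1 ∧ (t ≤ 0 ∨ ∃ U ∈ 𝒰, Metric.ball z t ⊆ U)}

/-- Scale function: (essentially) the largest radius `≤ 1` of a ball around `z`
contained in a single member of `𝒰`. -/
def rad (𝒰 : Set (Set ℂ)) (z : ℂ) : ℝ := sSup (radSet 𝒰 z)

variable {𝒰 : Set (Set ℂ)} {z w : ℂ}

lemma zero_mem_radSet : (0:ℝ) ∈ radSet 𝒰 z := ⟨zero_le_one, Or.inl le_rfl⟩

lemma radSet_nonempty : (radSet 𝒰 z).Nonempty := ⟨0, zero_mem_radSet⟩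

lemma radSet_bddAbove : BddAbove (radSet 𝒰 z) := ⟨1, fun _ ht => ht.1⟩

lemma rad_le_one : rad 𝒰 z ≤ 1 := csSup_le radSet_nonempty fun _ ht => ht.1

lemma rad_nonneg : 0 ≤ rad 𝒰 z := le_csSup radSet_bddAbove zero_mem_radSet

lemma exists_ball_subset {a : ℝ} (ha : 0 < a) (h : a < rad 𝒰 z) :
    ∃ U ∈ 𝒰, Metric.ball z a ⊆ U := by
  obtain ⟨t, ht, hat⟩ := exists_lt_of_lt_csSup radSet_nonempty h
  rcases ht.2 with h0 | ⟨U, hU, hball⟩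
  · linarith
  · exact ⟨U, hU, (Metric.ball_subset_ball hat.le).trans hball⟩

lemma le_rad {t : ℝ} (ht1 : t ≤ 1) (h : ∃ U ∈ 𝒰, Metric.ball z t ⊆ U) :
    t ≤ rad 𝒰 z := le_csSup radSet_bddAbove ⟨ht1, Or.inr h⟩

lemma rad_le_rad_add_dist : rad 𝒰 z ≤ rad 𝒰 w + dist z w := by
  apply csSup_le radSet_nonempty
  intro t ht
  obtain ⟨ht1, ht2⟩ := ht
  have hd : (0:ℝ) ≤ dist z w := dist_nonneg
  rcases le_or_gt t (dist z w) with h | h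
  · have := rad_nonneg (𝒰 := 𝒰) (z := w); linarith
  · have hmem : t - dist z w ∈ radSet 𝒰 w := by
      refine ⟨by linarith, ?_⟩
      rcases ht2 with h0 | ⟨U, hU, hball⟩
      · linarith
      · exact Or.inr ⟨U, hU, (Metric.ball_subset_ball' (by rw [dist_comm]; linarith)).trans hball⟩
    have hle : t - dist z w ≤ rad 𝒰 w := le_csSup (radSet_bddAbove (𝒰 := 𝒰) (z := w)) hmem
    linarith

lemma rad_lipschitz : |rad 𝒰 z - rad 𝒰 w| ≤ dist z w := by
  rw [abs_sub_le_iff]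
  constructor
  · linarith [rad_le_rad_add_dist (𝒰 := 𝒰) (z := z) (w := w)]
  · rw [dist_comm]; linarith [rad_le_rad_add_dist (𝒰 := 𝒰) (z := w) (w := z)]

lemma conj_ball (c : ℂ) (t : ℝ) :
    Metric.ball ((starRingEnd ℂ) c) t = (starRingEnd ℂ) '' Metric.ball c t := by
  ext w
  simp only [Metric.mem_ball, Set.mem_image]
  constructor
  · intro h
    refine ⟨(starRingEnd ℂ) w, ?_, Complex.conj_conj w⟩
    have : dist ((starRingEnd ℂ) w) c = dist w ((starRingEnd ℂ) c) := by
      rw [← Complex.dist_conj_conj w ((starRingEnd ℂ) c), Complex.conj_conj]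
    rw [this]
    exact h
  · rintro ⟨u, hu, rfl⟩
    simpa [Complex.dist_conj_conj] using hu

lemma rad_conj (hUsym : ∀ U ∈ 𝒰, (starRingEnd ℂ) '' U = U) :
    rad 𝒰 ((starRingEnd ℂ) z) = rad 𝒰 z := by
  have key : ∀ c : ℂ, radSet 𝒰 ((starRingEnd ℂ) c) ⊆ radSet 𝒰 c := by
    intro c t ht
    refine ⟨ht.1, ?_⟩
    rcases ht.2 with h0 | ⟨U, hU, hball⟩
    · exact Or.inl h0
    · refine Or.inr ⟨U, hU, fun u hu => ?_⟩
      have : (starRingEnd ℂ) u ∈ Metric.ball ((starRingEnd ℂ) c) t := by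
        rw [Metric.mem_ball, Complex.dist_conj_conj]
        exact hu
      have := hball this
      rw [← hUsym U hU]
      exact ⟨(starRingEnd ℂ) u, this, Complex.conj_conj u⟩
  have h1 := key z
  have h2 := key ((starRingEnd ℂ) z)
  rw [Complex.conj_conj] at h2
  exact le_antisymm (csSup_le_csSup radSet_bddAbove radSet_nonempty h1)
    (csSup_le_csSup radSet_bddAbove radSet_nonempty h2)


/-! ### Dyadic squares -/

/-- side length of scale-`k` squares -/
def d (k : ℕ) : ℝ := (2:ℝ) ^ (-(k:ℤ))

lemma d_pos (k : ℕ) : 0 < d k := by unfold d; positivity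

lemma d_le_one (k : ℕ) : d k ≤ 1 := by
  unfold d
  apply zpow_le_one_of_nonpos₀ one_le_two
  simp

lemma d_zero : d 0 = 1 := by simp [d]

lemma d_mul {k k' : ℕ} (h : k ≤ k') : d k = (2:ℝ)^(k'-k) * d k' := by
  unfold d
  rw [← zpow_natCast (2:ℝ) (k'-k), ← zpow_add₀ (two_ne_zero)]
  congr 1
  have : ((k' - k : ℕ) : ℤ) = (k' : ℤ) - k := by omega
  rw [this]; ring

lemma d_anti {k k' : ℕ} (h : k ≤ k') : d k' ≤ d k := by
  rw [d_mul h]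
  nth_rewrite 1 [show d k' = 1 * d k' by ring]
  apply mul_le_mul_of_nonneg_right _ (d_pos k').le
  exact one_le_pow₀ one_le_two

lemma d_pred {k : ℕ} (hk : 1 ≤ k) : d (k-1) = 2 * d k := by
  rw [d_mul (show k - 1 ≤ k by omega)]
  congr 1
  rw [show k - (k-1) = 1 by omega]
  norm_num

lemma exists_d_lt {ε : ℝ} (hε : 0 < ε) : ∃ k : ℕ, d k < ε := by
  obtain ⟨n, hn⟩ := exists_pow_lt_of_lt_one hε (by norm_num : (1/2 : ℝ) < 1)
  refine ⟨n, ?_⟩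
  have : d n = (1/2 : ℝ)^n := by
    unfold d
    rw [one_div, inv_pow, ← zpow_natCast (2:ℝ) n, ← zpow_neg]
  rw [this]; exact hn

/-- closed dyadic square -/
def sq (k : ℕ) (i j : ℤ) : Set ℂ :=
  {z | (i:ℝ) * d k ≤ z.re ∧ z.re ≤ ((i:ℝ)+1) * d k ∧
       (j:ℝ) * d k ≤ z.im ∧ z.im ≤ ((j:ℝ)+1) * d k}

/-- open dyadic square -/
def osq (k : ℕ) (i j : ℤ) : Set ℂ :=
  {z | (i:ℝ) * d k < z.re ∧ z.re < ((i:ℝ)+1) * d k ∧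
       (j:ℝ) * d k < z.im ∧ z.im < ((j:ℝ)+1) * d k}

lemma corner_mem_sq {k : ℕ} {i j : ℤ} : (⟨(i:ℝ) * d k, (j:ℝ) * d k⟩ : ℂ) ∈ sq k i j := by
  refine ⟨le_rfl, ?_, le_rfl, ?_⟩ <;>
  · simp only []
    have := d_pos k
    nlinarith

lemma dist_le_re_im (z w : ℂ) : dist z w ≤ |z.re - w.re| + |z.im - w.im| := by
  have hzw : z - w = ((z.re - w.re : ℝ) : ℂ) + ((z.im - w.im : ℝ) : ℂ) * Complex.I := by
    apply Complex.ext <;> simp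
  rw [Complex.dist_eq, hzw]
  refine (norm_add_le _ _).trans ?_
  rw [norm_mul, Complex.norm_I, mul_one, Complex.norm_real, Complex.norm_real, Real.norm_eq_abs,
    Real.norm_eq_abs]

lemma dist_le_of_mem_sq {k : ℕ} {i j : ℤ} {z w : ℂ} (hz : z ∈ sq k i j) (hw : w ∈ sq k i j) :
    dist z w ≤ 2 * d k := by
  obtain ⟨a1, a2, a3, a4⟩ := hz
  obtain ⟨b1, b2, b3, b4⟩ := hw
  have h1 : |z.re - w.re| ≤ d k := by rw [abs_le]; constructor <;> nlinarith
  have h2 : |z.im - w.im| ≤ d k := by rw [abs_le]; constructor <;> nlinarith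
  calc dist z w ≤ |z.re - w.re| + |z.im - w.im| := dist_le_re_im z w
  _ ≤ 2 * d k := by linarith

/-! ### Good and selected squares -/

def Good (𝒰 : Set (Set ℂ)) (k : ℕ) (i j : ℤ) : Prop :=
  ∀ z ∈ sq k i j, 20 * d k < rad 𝒰 z

/-- A square is selected if it is good but is contained in no good square of the
previous scale. -/
def Sel (𝒰 : Set (Set ℂ)) (k : ℕ) (i j : ℤ) : Prop :=
  Good 𝒰 k i j ∧ ∀ i' j' : ℤ, sq k i j ⊆ sq (k-1) i' j' → ¬ Good 𝒰 (k-1) i' j'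

variable {𝒰 : Set (Set ℂ)}

lemma not_good_zero (i j : ℤ) : ¬ Good 𝒰 0 i j := by
  intro h
  have h2 := h _ corner_mem_sq
  have h1 := rad_le_one (𝒰 := 𝒰) (z := (⟨(i:ℝ) * d 0, (j:ℝ) * d 0⟩ : ℂ))
  have h3 : d 0 = 1 := d_zero
  linarith

lemma sel_one_le {k : ℕ} {i j : ℤ} (h : Sel 𝒰 k i j) : 1 ≤ k := by
  by_contra hk
  have hk0 : k = 0 := by omega
  subst hk0
  exact h.2 i j subset_rfl h.1

lemma good_mono {k k' : ℕ} {i j i' j' : ℤ} (hsub : sq k' i' j' ⊆ sq k i j) (hkk : k ≤ k')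
    (h : Good 𝒰 k i j) : Good 𝒰 k' i' j' := by
  intro z hz
  have := h z (hsub hz)
  have := d_anti hkk
  linarith

/-- one-dimensional: two open same-scale intervals sharing a point coincide -/
lemma oInt_eq {k : ℕ} {i i' : ℤ} {x : ℝ}
    (h1 : (i:ℝ) * d k < x) (h2 : x < ((i:ℝ)+1) * d k)
    (h1' : (i':ℝ) * d k < x) (h2' : x < ((i':ℝ)+1) * d k) : i = i' := by
  have hd := d_pos k
  have e1 : (i:ℝ) < (i':ℝ) + 1 := by
    have := h1.trans h2'
    have := (mul_lt_mul_iff_of_pos_right hd).mp this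
    linarith
  have e2 : (i':ℝ) < (i:ℝ) + 1 := by
    have := h1'.trans h2
    have := (mul_lt_mul_iff_of_pos_right hd).mp this
    linarith
  have : i < i' + 1 := by exact_mod_cast e1
  have : i' < i + 1 := by exact_mod_cast e2
  omega

/-- one-dimensional nesting: if open dyadic intervals at scales `k ≤ k'` share a point,
the finer closed interval's endpoints lie inside the coarser one's. -/
lemma int_nested {k k' : ℕ} (hkk : k ≤ k') {i i' : ℤ} {x : ℝ}
    (h1 : (i:ℝ) * d k < x) (h2 : x < ((i:ℝ)+1) * d k)
    (h1' : (i':ℝ) * d k' < x) (h2' : x < ((i':ℝ)+1) * d k') :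
    (i:ℝ) * d k ≤ (i':ℝ) * d k' ∧ ((i':ℝ)+1) * d k' ≤ ((i:ℝ)+1) * d k := by
  have hd' := d_pos k'
  set N : ℕ := 2^(k'-k) with hN
  have hdm : d k = (N:ℝ) * d k' := by rw [d_mul hkk]; norm_num [hN]
  have e1 : (i * N : ℤ) < i' + 1 := by
    have step : ((i:ℝ) * N) * d k' < ((i':ℝ)+1) * d k' := by
      rw [mul_assoc, ← hdm]
      exact h1.trans h2'
    have := (mul_lt_mul_iff_of_pos_right hd').mp step
    exact_mod_cast this
  have e2 : (i' : ℤ) < (i+1) * N := by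
    have : ((i':ℝ)) * d k' < ((i:ℝ)+1) * N * d k' := by
      rw [mul_assoc, ← hdm]
      exact h1'.trans h2
    have := (mul_lt_mul_iff_of_pos_right hd').mp this
    exact_mod_cast this
  constructor
  · have : (i * N : ℤ) ≤ i' := by omega
    have : ((i:ℝ)) * N ≤ (i' : ℝ) := by exact_mod_cast this
    rw [hdm, ← mul_assoc]
    exact mul_le_mul_of_nonneg_right this hd'.le
  · have : (i' + 1 : ℤ) ≤ (i+1) * N := by omega
    have : ((i':ℝ)) + 1 ≤ ((i:ℝ)+1) * N := by exact_mod_cast this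
    rw [hdm, ← mul_assoc]
    exact mul_le_mul_of_nonneg_right this hd'.le

/-- existence of the parent interval -/
lemma exists_parent1 {k : ℕ} (hk : 1 ≤ k) (i : ℤ) :
    ∃ i' : ℤ, (i':ℝ) * d (k-1) ≤ (i:ℝ) * d k ∧ ((i:ℝ)+1) * d k ≤ ((i':ℝ)+1) * d (k-1) := by
  have hd := d_pos k
  have hp := d_pred hk
  rcases Int.even_or_odd i with ⟨m, hm⟩ | ⟨m, hm⟩
  · refine ⟨m, ?_, ?_⟩ <;> · subst hm; push_cast; rw [hp]; nlinarith
  · refine ⟨m, ?_, ?_⟩ <;> · subst hm; push_cast; rw [hp]; nlinarith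

lemma exists_parent {k : ℕ} (hk : 1 ≤ k) (i j : ℤ) :
    ∃ i' j' : ℤ, sq k i j ⊆ sq (k-1) i' j' ∧ osq k i j ⊆ osq (k-1) i' j' := by
  obtain ⟨i', hi1, hi2⟩ := exists_parent1 hk i
  obtain ⟨j', hj1, hj2⟩ := exists_parent1 hk j
  refine ⟨i', j', ?_, ?_⟩
  · rintro z ⟨a1, a2, a3, a4⟩
    exact ⟨hi1.trans a1, a2.trans hi2, hj1.trans a3, a4.trans hj2⟩
  · rintro z ⟨a1, a2, a3, a4⟩
    exact ⟨hi1.trans_lt a1, a2.trans_le hi2, hj1.trans_lt a3, a4.trans_le hj2⟩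

/-- distinct selected squares have disjoint interiors -/
lemma sel_osq_disjoint {k k' : ℕ} {i j i' j' : ℤ} (h : Sel 𝒰 k i j) (h' : Sel 𝒰 k' i' j')
    (hne : ¬ (k = k' ∧ i = i' ∧ j = j')) {z : ℂ}
    (hz : z ∈ osq k i j) (hz' : z ∈ osq k' i' j') : False := by
  -- reduce to the case k ≤ k'
  wlog hkk : k ≤ k' generalizing k k' i j i' j'
  · exact this h' h (by tauto) hz' hz (by omega)
  obtain ⟨a1, a2, a3, a4⟩ := hz
  obtain ⟨b1, b2, b3, b4⟩ := hz'
  rcases eq_or_lt_of_le hkk with heq | hlt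
  · subst heq
    exact hne ⟨rfl, oInt_eq a1 a2 b1 b2, oInt_eq a3 a4 b3 b4⟩
  · have hk'1 : 1 ≤ k' := by omega
    obtain ⟨pi, pj, hps, hpo⟩ := exists_parent hk'1 i' j'
    obtain ⟨c1, c2, c3, c4⟩ := hpo ⟨b1, b2, b3, b4⟩
    have hsub : sq (k'-1) pi pj ⊆ sq k i j := by
      have hx := int_nested (show k ≤ k'-1 by omega) a1 a2 c1 c2
      have hy := int_nested (show k ≤ k'-1 by omega) a3 a4 c3 c4
      rintro w ⟨w1, w2, w3, w4⟩
      exact ⟨hx.1.trans w1, w2.trans hx.2, hy.1.trans w3, w4.trans hy.2⟩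
    exact h'.2 pi pj hps (good_mono hsub (by omega) h.1)


/-! ### Coverage -/

/-- tower index -/
def iz (k : ℕ) (x : ℝ) : ℤ := ⌊x / d k⌋

lemma mem_tower (z : ℂ) (k : ℕ) : z ∈ sq k (iz k z.re) (iz k z.im) := by
  have hd := d_pos k
  have h1 : ∀ x : ℝ, (iz k x : ℝ) * d k ≤ x := by
    intro x
    have := Int.floor_le (x / d k)
    calc (iz k x : ℝ) * d k ≤ (x / d k) * d k := by
          exact mul_le_mul_of_nonneg_right this hd.le
    _ = x := by field_simp
  have h2 : ∀ x : ℝ, x ≤ ((iz k x : ℝ) + 1) * d k := by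
    intro x
    have := (Int.lt_floor_add_one (x / d k)).le
    calc x = (x / d k) * d k := by field_simp
    _ ≤ ((iz k x : ℝ) + 1) * d k := by
          exact mul_le_mul_of_nonneg_right (by exact_mod_cast this) hd.le
  exact ⟨h1 z.re, h2 z.re, h1 z.im, h2 z.im⟩

lemma floor_scale {k : ℕ} (hk : 1 ≤ k) (x : ℝ) :
    2 * iz (k-1) x ≤ iz k x ∧ iz k x ≤ 2 * iz (k-1) x + 1 := by
  have hd := d_pos k
  have hp := d_pred hk
  set n := iz (k-1) x with hn
  have f1 : (n:ℝ) ≤ x / d (k-1) := Int.floor_le _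
  have f2 : x / d (k-1) < (n:ℝ) + 1 := Int.lt_floor_add_one _
  have hne : d (k-1) ≠ 0 := (d_pos _).ne'
  have hx1 : (n:ℝ) * (2 * d k) ≤ x := by
    rw [← hp]
    calc (n:ℝ) * d (k-1) ≤ (x / d (k-1)) * d (k-1) :=
          mul_le_mul_of_nonneg_right f1 (d_pos _).le
    _ = x := by field_simp
  have hx2 : x < ((n:ℝ) + 1) * (2 * d k) := by
    rw [← hp]
    calc x = (x / d (k-1)) * d (k-1) := by field_simp
    _ < ((n:ℝ) + 1) * d (k-1) := by
          exact mul_lt_mul_of_pos_right f2 (d_pos _)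
  constructor
  · rw [hn]
    apply Int.le_floor.mpr
    push_cast
    rw [le_div_iff₀ hd]
    push_cast at hx1 ⊢
    linarith
  · have : iz k x < 2 * n + 2 := by
      apply Int.floor_lt.mpr
      rw [div_lt_iff₀ hd]
      push_cast
      push_cast at hx2
      linarith
    omega

lemma top_corner_mem_sq {k : ℕ} {i j : ℤ} :
    (⟨((i:ℝ)+1) * d k, ((j:ℝ)+1) * d k⟩ : ℂ) ∈ sq k i j := by
  refine ⟨?_, le_rfl, ?_, le_rfl⟩ <;>
  · simp only []
    have := d_pos k
    nlinarith

lemma parent_index {k : ℕ} (hk : 1 ≤ k) {i j i' j' : ℤ}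
    (hsub : sq k i j ⊆ sq (k-1) i' j') :
    (2*i' ≤ i ∧ i ≤ 2*i'+1) ∧ (2*j' ≤ j ∧ j ≤ 2*j'+1) := by
  have hd := d_pos k
  have hp := d_pred hk
  obtain ⟨c1, _, c3, _⟩ := hsub (corner_mem_sq (k := k) (i := i) (j := j))
  obtain ⟨_, c2, _, c4⟩ := hsub (top_corner_mem_sq (k := k) (i := i) (j := j))
  simp only [] at c1 c2 c3 c4
  rw [hp] at c1 c2 c3 c4
  constructor
  · constructor
    · have : (2 * i' : ℝ) ≤ i := by nlinarith
      exact_mod_cast this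
    · have : (i : ℝ) ≤ 2 * i' + 1 := by nlinarith
      exact_mod_cast this
  · constructor
    · have : (2 * j' : ℝ) ≤ j := by nlinarith
      exact_mod_cast this
    · have : (j : ℝ) ≤ 2 * j' + 1 := by nlinarith
      exact_mod_cast this

lemma exists_sel_mem {z : ℂ} (hz : 0 < rad 𝒰 z) :
    ∃ k i j, Sel 𝒰 k i j ∧ z ∈ sq k i j := by
  have hgood : ∃ k, Good 𝒰 k (iz k z.re) (iz k z.im) := by
    obtain ⟨k, hk⟩ := exists_d_lt (show 0 < rad 𝒰 z / 22 by linarith)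
    refine ⟨k, fun w hw => ?_⟩
    have hdist : dist z w ≤ 2 * d k := dist_le_of_mem_sq (mem_tower z k) hw
    have := rad_le_rad_add_dist (𝒰 := 𝒰) (z := z) (w := w)
    linarith
  classical
  set k₀ := Nat.find hgood with hk₀
  have hspec := Nat.find_spec hgood
  have hk₀1 : 1 ≤ k₀ := by
    rcases Nat.eq_zero_or_pos k₀ with h0 | h1
    · exfalso; rw [← hk₀, h0] at hspec; exact not_good_zero _ _ hspec
    · exact h1
  refine ⟨k₀, iz k₀ z.re, iz k₀ z.im, ⟨hspec, ?_⟩, mem_tower z k₀⟩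
  intro i' j' hsub
  obtain ⟨⟨e1, e2⟩, ⟨e3, e4⟩⟩ := parent_index hk₀1 hsub
  obtain ⟨f1, f2⟩ := floor_scale hk₀1 z.re
  obtain ⟨f3, f4⟩ := floor_scale hk₀1 z.im
  have hi : i' = iz (k₀-1) z.re := by omega
  have hj : j' = iz (k₀-1) z.im := by omega
  subst hi hj
  exact Nat.find_min hgood (by omega)

/-! ### Comparability of nearby selected squares -/

lemma sel_bad_point {k : ℕ} {i j : ℤ} (h : Sel 𝒰 k i j) :
    ∃ w : ℂ, rad 𝒰 w ≤ 40 * d k ∧ ∀ u ∈ sq k i j, dist u w ≤ 4 * d k := by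
  have hk := sel_one_le h
  obtain ⟨pi, pj, hps, _⟩ := exists_parent hk i j
  have hbad := h.2 pi pj hps
  unfold Good at hbad
  push_neg at hbad
  obtain ⟨w, hw, hwr⟩ := hbad
  refine ⟨w, by rw [d_pred hk] at hwr; linarith, fun u hu => ?_⟩
  have := dist_le_of_mem_sq (hps hu) hw
  rw [d_pred hk] at this
  linarith

lemma sel_ratio {k k' : ℕ} {i j i' j' : ℤ} (h : Sel 𝒰 k i j) (hg' : Good 𝒰 k' i' j')
    {u u' : ℂ} (hu : u ∈ sq k i j) (hu' : u' ∈ sq k' i' j')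
    (hdist : dist u u' ≤ 3 * (d k + d k')) : d k' < 3 * d k := by
  obtain ⟨w, hwr, hwd⟩ := sel_bad_point h
  have h1 : 20 * d k' < rad 𝒰 u' := hg' u' hu'
  have h2 : rad 𝒰 u' ≤ rad 𝒰 w + dist u' w := rad_le_rad_add_dist
  have h3 : dist u' w ≤ dist u' u + dist u w := dist_triangle _ _ _
  have h4 : dist u w ≤ 4 * d k := hwd u hu
  rw [dist_comm] at hdist
  have := d_pos k
  linarith

lemma good_ball_subset {k : ℕ} {i j : ℤ} (h : Good 𝒰 k i j) {z : ℂ} (hz : z ∈ sq k i j) :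
    ∃ U ∈ 𝒰, Metric.ball z (10 * d k) ⊆ U := by
  apply exists_ball_subset (by have := d_pos k; linarith)
  have := h z hz
  have := d_pos k
  linarith


/-! ### Corners -/

def isCorner (c : ℂ) (k : ℕ) (i j : ℤ) : Prop :=
  (c.re = (i:ℝ) * d k ∨ c.re = ((i:ℝ)+1) * d k) ∧
  (c.im = (j:ℝ) * d k ∨ c.im = ((j:ℝ)+1) * d k)

def cornerScales (𝒰 : Set (Set ℂ)) (c : ℂ) : Set ℕ :=
  {k | ∃ i j, Sel 𝒰 k i j ∧ isCorner c k i j}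

def Corners (𝒰 : Set (Set ℂ)) : Set ℂ := {c | (cornerScales 𝒰 c).Nonempty}

/-- coarsest scale of a selected square having `c` as corner -/
def Kc (𝒰 : Set (Set ℂ)) (c : ℂ) : ℕ := sInf (cornerScales 𝒰 c)

def rho (𝒰 : Set (Set ℂ)) (c : ℂ) : ℝ := d (Kc 𝒰 c) / 10^5

lemma rho_pos (c : ℂ) : 0 < rho 𝒰 c := by
  unfold rho; have := d_pos (Kc 𝒰 c); positivity

lemma corner_mem {c : ℂ} {k : ℕ} {i j : ℤ} (hc : isCorner c k i j) : c ∈ sq k i j := by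
  have hd := d_pos k
  have hre1 : (i:ℝ) * d k ≤ c.re := by rcases hc.1 with h | h <;> nlinarith
  have hre2 : c.re ≤ ((i:ℝ)+1) * d k := by rcases hc.1 with h | h <;> nlinarith
  have him1 : (j:ℝ) * d k ≤ c.im := by rcases hc.2 with h | h <;> nlinarith
  have him2 : c.im ≤ ((j:ℝ)+1) * d k := by rcases hc.2 with h | h <;> nlinarith
  exact ⟨hre1, hre2, him1, him2⟩

lemma Kc_spec {c : ℂ} (hc : c ∈ Corners 𝒰) :
    ∃ i j, Sel 𝒰 (Kc 𝒰 c) i j ∧ isCorner c (Kc 𝒰 c) i j :=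
  Nat.sInf_mem hc

lemma Kc_le {c : ℂ} {k : ℕ} {i j : ℤ} (h : Sel 𝒰 k i j) (hc : isCorner c k i j) :
    Kc 𝒰 c ≤ k :=
  Nat.sInf_le ⟨i, j, h, hc⟩

/-- the coarsest corner scale is comparable to any cell having `c` as a corner -/
lemma Kc_ratio {c : ℂ} {k : ℕ} {i j : ℤ} (h : Sel 𝒰 k i j) (hc : isCorner c k i j) :
    d k ≤ d (Kc 𝒰 c) ∧ d (Kc 𝒰 c) < 3 * d k := by
  have hK := Kc_le h hc
  have hmem : c ∈ Corners 𝒰 := ⟨k, i, j, h, hc⟩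
  obtain ⟨ci, cj, hsel, hcor⟩ := Kc_spec hmem
  refine ⟨d_anti hK, ?_⟩
  exact sel_ratio h hsel.1 (corner_mem hc) (corner_mem hcor)
    (by rw [dist_self]; have := d_pos k; have := d_pos (Kc 𝒰 c); linarith)

/-- distinct points on (possibly different) dyadic grids are separated -/
lemma grid_sep {k k' : ℕ} {m m' : ℤ} (h : (m:ℝ) * d k ≠ (m':ℝ) * d k') :
    min (d k) (d k') ≤ |(m:ℝ) * d k - (m':ℝ) * d k'| := by
  wlog hkk : k ≤ k' generalizing k k' m m'
  · rw [min_comm, abs_sub_comm]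
    exact this (by exact h.symm) (by omega)
  have hd' := d_pos k'
  set N : ℕ := 2^(k'-k) with hN
  have hdm : d k = (N:ℝ) * d k' := by rw [d_mul hkk]; norm_num [hN]
  have key : (m:ℝ) * d k - (m':ℝ) * d k' = ((m * N - m' : ℤ) : ℝ) * d k' := by
    push_cast [hdm]; ring
  have hz : (m * N - m' : ℤ) ≠ 0 := by
    intro h0
    apply h
    have h00 : (m:ℝ) * d k - (m':ℝ) * d k' = 0 := by rw [key, h0]; simp
    linarith
  have : (1:ℝ) ≤ |((m * N - m' : ℤ) : ℝ)| := by
    rw [← Int.cast_abs]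
    exact_mod_cast Int.one_le_abs hz
  rw [key, abs_mul, abs_of_pos hd']
  calc min (d k) (d k') ≤ d k' := min_le_right _ _
  _ = 1 * d k' := (one_mul _).symm
  _ ≤ |((m * N - m' : ℤ) : ℝ)| * d k' := by
        exact mul_le_mul_of_nonneg_right this hd'.le

lemma corner_grid {c : ℂ} {k : ℕ} {i j : ℤ} (hc : isCorner c k i j) :
    (∃ m : ℤ, c.re = (m:ℝ) * d k) ∧ (∃ m : ℤ, c.im = (m:ℝ) * d k) := by
  obtain ⟨h1 | h1, h2 | h2⟩ := hc
  · exact ⟨⟨i, h1⟩, ⟨j, h2⟩⟩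
  · exact ⟨⟨i, h1⟩, ⟨j+1, by push_cast; exact h2⟩⟩
  · exact ⟨⟨i+1, by push_cast; exact h1⟩, ⟨j, h2⟩⟩
  · exact ⟨⟨i+1, by push_cast; exact h1⟩, ⟨j+1, by push_cast; exact h2⟩⟩

/-- the Δ-disks around distinct corners are disjoint -/
lemma delta_disjoint {c c' : ℂ} (hc : c ∈ Corners 𝒰) (hc' : c' ∈ Corners 𝒰)
    (hne : c ≠ c') {q : ℂ} (h1 : dist q c < 4 * rho 𝒰 c) (h2 : dist q c' < 4 * rho 𝒰 c') :
    False := by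
  obtain ⟨i, j, hsel, hcor⟩ := Kc_spec hc
  obtain ⟨i', j', hsel', hcor'⟩ := Kc_spec hc'
  set K := Kc 𝒰 c
  set K' := Kc 𝒰 c'
  have hdc : dist c c' < (4 / 10^5) * (d K + d K') := by
    have := dist_triangle c q c'
    rw [dist_comm c q] at this
    unfold rho at h1 h2
    have := d_pos K; have := d_pos K'
    linarith
  have hKp := d_pos K; have hK'p := d_pos K'
  have hratio1 : d K' < 3 * d K := by
    refine sel_ratio hsel hsel'.1 (corner_mem hcor) (corner_mem hcor') ?_
    have : (4 / 10^5 : ℝ) * (d K + d K') ≤ 3 * (d K + d K') := by nlinarith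
    linarith [this, hdc]
  have hratio2 : d K < 3 * d K' := by
    refine sel_ratio hsel' hsel.1 (corner_mem hcor') (corner_mem hcor) ?_
    rw [dist_comm]
    have : (4 / 10^5 : ℝ) * (d K + d K') ≤ 3 * (d K' + d K) := by nlinarith
    linarith [this, hdc]
  obtain ⟨⟨mr, hmr⟩, ⟨mi, hmi⟩⟩ := corner_grid hcor
  obtain ⟨⟨mr', hmr'⟩, ⟨mi', hmi'⟩⟩ := corner_grid hcor'
  have hsep : min (d K) (d K') ≤ dist c c' := by
    have hne2 : ¬(c.re = c'.re ∧ c.im = c'.im) := fun hco => hne (Complex.ext hco.1 hco.2)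
    rcases not_and_or.mp hne2 with hre | him
    · have := grid_sep (k := K) (k' := K') (m := mr) (m' := mr')
        (by rw [← hmr, ← hmr']; exact hre)
      rw [← hmr, ← hmr'] at this
      calc min (d K) (d K') ≤ |c.re - c'.re| := this
      _ = |(c - c').re| := by rw [Complex.sub_re]
      _ ≤ ‖c - c'‖ := Complex.abs_re_le_norm _
      _ = dist c c' := (Complex.dist_eq c c').symm
    · have := grid_sep (k := K) (k' := K') (m := mi) (m' := mi')
        (by rw [← hmi, ← hmi']; exact him)
      rw [← hmi, ← hmi'] at this
      calc min (d K) (d K') ≤ |c.im - c'.im| := this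
      _ = |(c - c').im| := by rw [Complex.sub_im]
      _ ≤ ‖c - c'‖ := Complex.abs_im_le_norm _
      _ = dist c c' := (Complex.dist_eq c c').symm
  rcases le_total (d K) (d K') with hle | hle
  · rw [min_eq_left hle] at hsep; nlinarith
  · rw [min_eq_right hle] at hsep; nlinarith


/-! ### The three-squares lemma -/

/-- 1-D overlap lemma -/
lemma ov1d {a₁ b₁ a₂ b₂ q ε : ℝ} (hε : 0 < ε)
    (h₁ : a₁ + 100*ε ≤ b₁) (h₂ : a₂ + 100*ε ≤ b₂)
    (n₁ : a₁ - ε ≤ q) (n₁' : q ≤ b₁ + ε) (n₂ : a₂ - ε ≤ q) (n₂' : q ≤ b₂ + ε)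
    (H₁ : ¬(b₁ ≤ q + 4*ε ∧ q - 4*ε ≤ a₂)) (H₂ : ¬(b₂ ≤ q + 4*ε ∧ q - 4*ε ≤ a₁)) :
    ∃ w, (a₁ < w ∧ w < b₁) ∧ (a₂ < w ∧ w < b₂) := by
  refine ⟨max a₁ a₂ + ε, ⟨?_, ?_⟩, ?_, ?_⟩
  · have := le_max_left a₁ a₂; linarith
  · rcases le_total a₂ a₁ with hc | hc
    · rw [max_eq_left hc]; linarith
    · rw [max_eq_right hc]
      by_contra hcon
      push_neg at hcon
      exact H₁ ⟨by linarith, by linarith⟩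
  · have := le_max_right a₁ a₂; linarith
  · rcases le_total a₁ a₂ with hc | hc
    · rw [max_eq_right hc]; linarith
    · rw [max_eq_left hc]
      by_contra hcon
      push_neg at hcon
      exact H₂ ⟨by linarith, by linarith⟩

/-- the open neighborhood of a square used as covering member -/
def Nbd (k : ℕ) (i j : ℤ) : Set ℂ :=
  {z | (i:ℝ)*d k - d k/10^9 < z.re ∧ z.re < ((i:ℝ)+1)*d k + d k/10^9 ∧
       (j:ℝ)*d k - d k/10^9 < z.im ∧ z.im < ((j:ℝ)+1)*d k + d k/10^9}

lemma sq_subset_nbd {k : ℕ} {i j : ℤ} : sq k i j ⊆ Nbd k i j := by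
  rintro z ⟨h1, h2, h3, h4⟩
  have hd := d_pos k
  refine ⟨by nlinarith, by nlinarith, by nlinarith, by nlinarith⟩

lemma isOpen_nbd (k : ℕ) (i j : ℤ) : IsOpen (Nbd k i j) := by
  have : Nbd k i j = (Complex.re ⁻¹' (Ioo ((i:ℝ)*d k - d k/10^9) (((i:ℝ)+1)*d k + d k/10^9)))
      ∩ (Complex.im ⁻¹' (Ioo ((j:ℝ)*d k - d k/10^9) (((j:ℝ)+1)*d k + d k/10^9))) := by
    ext z
    simp only [Nbd, mem_setOf_eq, mem_inter_iff, mem_preimage, mem_Ioo]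
    tauto
  rw [this]
  exact (isOpen_Ioo.preimage Complex.continuous_re).inter
    (isOpen_Ioo.preimage Complex.continuous_im)

/-- clamping a nearby point into a square -/
lemma clamp_mem {k : ℕ} {i j : ℤ} {q : ℂ} (hq : q ∈ Nbd k i j) :
    ∃ u ∈ sq k i j, dist q u ≤ 2 * (d k / 10^9) := by
  obtain ⟨h1, h2, h3, h4⟩ := hq
  have hd := d_pos k
  have key : ∀ a b x δ : ℝ, 0 < δ → a ≤ b → a - δ < x → x < b + δ →
      ∃ u, a ≤ u ∧ u ≤ b ∧ |x - u| ≤ δ := by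
    intro a b x δ hδ hab hax hxb
    rcases le_total x a with hc | hc
    · exact ⟨a, le_rfl, hab, by rw [abs_sub_comm, abs_of_nonneg (by linarith)]; linarith⟩
    rcases le_total b x with hc' | hc'
    · exact ⟨b, hab, le_rfl, by rw [abs_of_nonneg (by linarith)]; linarith⟩
    · exact ⟨x, hc, hc', by simpa using hδ.le⟩
  have hab : (i:ℝ)*d k ≤ ((i:ℝ)+1)*d k := by nlinarith
  have hab' : (j:ℝ)*d k ≤ ((j:ℝ)+1)*d k := by nlinarith
  obtain ⟨ur, hur1, hur2, hur3⟩ := key _ _ q.re (d k/10^9) (by positivity) hab h1 h2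
  obtain ⟨ui, hui1, hui2, hui3⟩ := key _ _ q.im (d k/10^9) (by positivity) hab' h3 h4
  refine ⟨⟨ur, ui⟩, ⟨hur1, hur2, hui1, hui2⟩, ?_⟩
  calc dist q (⟨ur, ui⟩ : ℂ) ≤ |q.re - ur| + |q.im - ui| := dist_le_re_im _ _
  _ ≤ 2 * (d k / 10^9) := by linarith

/-- opposition of two distinct nearby selected squares -/
lemma pair_opp {k₁ k₂ : ℕ} {i₁ j₁ i₂ j₂ : ℤ} (h₁ : Sel 𝒰 k₁ i₁ j₁) (h₂ : Sel 𝒰 k₂ i₂ j₂)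
    (hne : ¬(k₁ = k₂ ∧ i₁ = i₂ ∧ j₁ = j₂)) {q : ℂ} {ε : ℝ} (hε : 0 < ε)
    (hs₁ : 100*ε ≤ d k₁) (hs₂ : 100*ε ≤ d k₂)
    (hq₁ : q ∈ Nbd k₁ i₁ j₁) (hq₂ : q ∈ Nbd k₂ i₂ j₂)
    (hδ₁ : d k₁/10^9 ≤ ε) (hδ₂ : d k₂/10^9 ≤ ε) :
    (((i₁:ℝ)+1)*d k₁ ≤ q.re + 4*ε ∧ q.re - 4*ε ≤ (i₂:ℝ)*d k₂) ∨
    (((i₂:ℝ)+1)*d k₂ ≤ q.re + 4*ε ∧ q.re - 4*ε ≤ (i₁:ℝ)*d k₁) ∨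
    (((j₁:ℝ)+1)*d k₁ ≤ q.im + 4*ε ∧ q.im - 4*ε ≤ (j₂:ℝ)*d k₂) ∨
    (((j₂:ℝ)+1)*d k₂ ≤ q.im + 4*ε ∧ q.im - 4*ε ≤ (j₁:ℝ)*d k₁) := by
  by_contra hcon
  rw [not_or, not_or, not_or] at hcon
  obtain ⟨P1, P2, P3, P4⟩ := hcon
  obtain ⟨a1, a2, a3, a4⟩ := hq₁
  obtain ⟨b1, b2, b3, b4⟩ := hq₂
  obtain ⟨wx, hwx1, hwx2⟩ := ov1d hε
    (show (i₁:ℝ)*d k₁ + 100*ε ≤ ((i₁:ℝ)+1)*d k₁ by nlinarith)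
    (show (i₂:ℝ)*d k₂ + 100*ε ≤ ((i₂:ℝ)+1)*d k₂ by nlinarith)
    (by linarith) (by linarith) (by linarith) (by linarith) P1 P2
  obtain ⟨wy, hwy1, hwy2⟩ := ov1d hε
    (show (j₁:ℝ)*d k₁ + 100*ε ≤ ((j₁:ℝ)+1)*d k₁ by nlinarith)
    (show (j₂:ℝ)*d k₂ + 100*ε ≤ ((j₂:ℝ)+1)*d k₂ by nlinarith)
    (by linarith) (by linarith) (by linarith) (by linarith) P3 P4
  exact sel_osq_disjoint h₁ h₂ hne
    (show (⟨wx, wy⟩ : ℂ) ∈ osq k₁ i₁ j₁ from ⟨hwx1.1, hwx1.2, hwy1.1, hwy1.2⟩)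
    (show (⟨wx, wy⟩ : ℂ) ∈ osq k₂ i₂ j₂ from ⟨hwx2.1, hwx2.2, hwy2.1, hwy2.2⟩)

/-- purely combinatorial core -/
lemma flags3 {L0 L1 L2 R0 R1 R2 B0 B1 B2 T0 T1 T2 : Prop}
    (h01 : (R0 ∧ L1) ∨ (R1 ∧ L0) ∨ (T0 ∧ B1) ∨ (T1 ∧ B0))
    (h02 : (R0 ∧ L2) ∨ (R2 ∧ L0) ∨ (T0 ∧ B2) ∨ (T2 ∧ B0))
    (h12 : (R1 ∧ L2) ∨ (R2 ∧ L1) ∨ (T1 ∧ B2) ∨ (T2 ∧ B1))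
    (eLR0 : L0 → R0 → False) (eLR1 : L1 → R1 → False) (eLR2 : L2 → R2 → False)
    (eBT0 : B0 → T0 → False) (eBT1 : B1 → T1 → False) (eBT2 : B2 → T2 → False)
    (eLB0 : L0 → B0 → False) (eLB1 : L1 → B1 → False) (eLB2 : L2 → B2 → False)
    (eLT0 : L0 → T0 → False) (eLT1 : L1 → T1 → False) (eLT2 : L2 → T2 → False)
    (eRB0 : R0 → B0 → False) (eRB1 : R1 → B1 → False) (eRB2 : R2 → B2 → False)
    (eRT0 : R0 → T0 → False) (eRT1 : R1 → T1 → False) (eRT2 : R2 → T2 → False) : False := by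
  rcases h01 with ⟨x1, x2⟩ | ⟨x1, x2⟩ | ⟨x1, x2⟩ | ⟨x1, x2⟩ <;>
  rcases h02 with ⟨y1, y2⟩ | ⟨y1, y2⟩ | ⟨y1, y2⟩ | ⟨y1, y2⟩ <;>
  rcases h12 with ⟨z1, z2⟩ | ⟨z1, z2⟩ | ⟨z1, z2⟩ | ⟨z1, z2⟩ <;>
  solve_by_elim

/-- the crux: three distinct selected squares near a point force a nearby corner -/
lemma crux {kf : Fin 3 → ℕ} {if' jf : Fin 3 → ℤ}
    (hsel : ∀ m, Sel 𝒰 (kf m) (if' m) (jf m))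
    (hne : ∀ m m', m ≠ m' → ¬(kf m = kf m' ∧ if' m = if' m' ∧ jf m = jf m'))
    {q : ℂ} (hq : ∀ m, q ∈ Nbd (kf m) (if' m) (jf m)) :
    ∃ p ∈ Corners 𝒰, dist q p ≤ 3 * rho 𝒰 p := by
  set ε : ℝ := (d (kf 0) + d (kf 1) + d (kf 2)) / 10^8 with hεdef
  have hd0 := d_pos (kf 0); have hd1 := d_pos (kf 1); have hd2 := d_pos (kf 2)
  have hε : 0 < ε := by rw [hεdef]; positivity
  -- pairwise size comparability
  have hcomp : ∀ m m', d (kf m) < 3 * d (kf m') := by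
    intro m m'
    rcases eq_or_ne m m' with rfl | hmm
    · have := d_pos (kf m); linarith
    obtain ⟨u, hu, hud⟩ := clamp_mem (hq m')
    obtain ⟨u', hu', hud'⟩ := clamp_mem (hq m)
    refine sel_ratio (hsel m') (hsel m).1 hu hu' ?_
    have h3 : dist u u' ≤ dist u q + dist q u' := dist_triangle _ _ _
    rw [dist_comm u q] at h3
    have p1 := d_pos (kf m); have p2 := d_pos (kf m')
    have b1 : d (kf m') / 10^9 ≤ d (kf m') := by linarith
    have b2 : d (kf m) / 10^9 ≤ d (kf m) := by linarith
    linarith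
  have hsize : ∀ m, 10^7 * ε ≤ d (kf m) := by
    intro m
    have c1 := hcomp 0 m; have c2 := hcomp 1 m; have c3 := hcomp 2 m
    rw [hεdef]
    have := d_pos (kf m)
    linarith
  have hsize100 : ∀ m, 100 * ε ≤ d (kf m) := by
    intro m; have := hsize m; linarith
  have hδ : ∀ m, d (kf m)/10^9 ≤ ε := by
    intro m
    have h0 := hcomp m 0
    rw [hεdef]
    linarith
  by_contra hcon
  push_neg at hcon
  have hnear : ∀ m, (if' m : ℝ) * d (kf m) ≤ q.re + ε ∧ q.re ≤ ((if' m : ℝ)+1) * d (kf m) + ε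
      ∧ (jf m : ℝ) * d (kf m) ≤ q.im + ε ∧ q.im ≤ ((jf m : ℝ)+1) * d (kf m) + ε := by
    intro m
    obtain ⟨a1, a2, a3, a4⟩ := hq m
    have := hδ m
    exact ⟨by linarith, by linarith, by linarith, by linarith⟩
  -- a corner-flag pair on a single cell yields a nearby corner, contradicting hcon
  have corner_case : ∀ m (cr ci : ℝ),
      (cr = (if' m : ℝ) * d (kf m) ∨ cr = ((if' m : ℝ)+1) * d (kf m)) →
      (ci = (jf m : ℝ) * d (kf m) ∨ ci = ((jf m : ℝ)+1) * d (kf m)) →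
      |q.re - cr| ≤ 5*ε → |q.im - ci| ≤ 5*ε → False := by
    intro m cr ci hcr hci hdr hdi
    set p : ℂ := ⟨cr, ci⟩ with hp
    have hcorner : isCorner p (kf m) (if' m) (jf m) := ⟨hcr, hci⟩
    have hpC : p ∈ Corners 𝒰 := ⟨kf m, if' m, jf m, hsel m, hcorner⟩
    have hdist : dist q p ≤ 10 * ε := by
      calc dist q p ≤ |q.re - p.re| + |q.im - p.im| := dist_le_re_im _ _
      _ ≤ 10 * ε := by rw [hp]; simp only []; linarith
    have hrho : 10 * ε ≤ 3 * rho 𝒰 p := by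
      obtain ⟨hK1, _⟩ := Kc_ratio (hsel m) hcorner
      unfold rho
      have hs := hsize m
      have : 10^7 * ε ≤ d (Kc 𝒰 p) := le_trans hs hK1
      linarith
    linarith [hcon p hpC]
  -- per-cell exclusions
  have eLR : ∀ m, q.re - 4*ε ≤ (if' m : ℝ) * d (kf m) →
      ((if' m : ℝ)+1) * d (kf m) ≤ q.re + 4*ε → False := by
    intro m hl hr
    have hs := hsize100 m
    have : ((if' m : ℝ)+1) * d (kf m) = (if' m : ℝ) * d (kf m) + d (kf m) := by ring
    linarith
  have eBT : ∀ m, q.im - 4*ε ≤ (jf m : ℝ) * d (kf m) →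
      ((jf m : ℝ)+1) * d (kf m) ≤ q.im + 4*ε → False := by
    intro m hb ht
    have hs := hsize100 m
    have : ((jf m : ℝ)+1) * d (kf m) = (jf m : ℝ) * d (kf m) + d (kf m) := by ring
    linarith
  have eLB : ∀ m, q.re - 4*ε ≤ (if' m : ℝ) * d (kf m) →
      q.im - 4*ε ≤ (jf m : ℝ) * d (kf m) → False := by
    intro m hl hb
    refine corner_case m _ _ (Or.inl rfl) (Or.inl rfl) ?_ ?_
    · rw [abs_le]; have := (hnear m).1; constructor <;> linarith
    · rw [abs_le]; have := (hnear m).2.2.1; constructor <;> linarith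
  have eLT : ∀ m, q.re - 4*ε ≤ (if' m : ℝ) * d (kf m) →
      ((jf m : ℝ)+1) * d (kf m) ≤ q.im + 4*ε → False := by
    intro m hl ht
    refine corner_case m _ _ (Or.inl rfl) (Or.inr rfl) ?_ ?_
    · rw [abs_le]; have := (hnear m).1; constructor <;> linarith
    · rw [abs_le]; have := (hnear m).2.2.2; constructor <;> linarith
  have eRB : ∀ m, ((if' m : ℝ)+1) * d (kf m) ≤ q.re + 4*ε →
      q.im - 4*ε ≤ (jf m : ℝ) * d (kf m) → False := by
    intro m hr hb
    refine corner_case m _ _ (Or.inr rfl) (Or.inl rfl) ?_ ?_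
    · rw [abs_le]; have := (hnear m).2.1; constructor <;> linarith
    · rw [abs_le]; have := (hnear m).2.2.1; constructor <;> linarith
  have eRT : ∀ m, ((if' m : ℝ)+1) * d (kf m) ≤ q.re + 4*ε →
      ((jf m : ℝ)+1) * d (kf m) ≤ q.im + 4*ε → False := by
    intro m hr ht
    refine corner_case m _ _ (Or.inr rfl) (Or.inr rfl) ?_ ?_
    · rw [abs_le]; have := (hnear m).2.1; constructor <;> linarith
    · rw [abs_le]; have := (hnear m).2.2.2; constructor <;> linarith
  have hpair : ∀ m m', m ≠ m' →
      (((if' m : ℝ)+1)*d (kf m) ≤ q.re + 4*ε ∧ q.re - 4*ε ≤ (if' m' : ℝ)*d (kf m')) ∨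
      (((if' m' : ℝ)+1)*d (kf m') ≤ q.re + 4*ε ∧ q.re - 4*ε ≤ (if' m : ℝ)*d (kf m)) ∨
      (((jf m : ℝ)+1)*d (kf m) ≤ q.im + 4*ε ∧ q.im - 4*ε ≤ (jf m' : ℝ)*d (kf m')) ∨
      (((jf m' : ℝ)+1)*d (kf m') ≤ q.im + 4*ε ∧ q.im - 4*ε ≤ (jf m : ℝ)*d (kf m)) := by
    intro m m' hmm
    exact pair_opp (hsel m) (hsel m') (hne m m' hmm) hε (hsize100 m) (hsize100 m')
      (hq m) (hq m') (hδ m) (hδ m')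
  exact flags3 (hpair 0 1 (by decide)) (hpair 0 2 (by decide)) (hpair 1 2 (by decide))
    (fun a b => eLR 0 a b) (fun a b => eLR 1 a b) (fun a b => eLR 2 a b)
    (fun a b => eBT 0 a b) (fun a b => eBT 1 a b) (fun a b => eBT 2 a b)
    (fun a b => eLB 0 a b) (fun a b => eLB 1 a b) (fun a b => eLB 2 a b)
    (fun a b => eLT 0 a b) (fun a b => eLT 1 a b) (fun a b => eLT 2 a b)
    (fun a b => eRB 0 a b) (fun a b => eRB 1 a b) (fun a b => eRB 2 a b)
    (fun a b => eRT 0 a b) (fun a b => eRT 1 a b) (fun a b => eRT 2 a b)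

/-! ### The members -/

/-- union of all (closed, shrunk) corner disks -/
def Cset (𝒰 : Set (Set ℂ)) : Set ℂ :=
  ⋃ c ∈ Corners 𝒰, Metric.closedBall c (3 * rho 𝒰 c)

/-- shrunk open neighborhood of a selected square -/
def Tset (𝒰 : Set (Set ℂ)) (k : ℕ) (i j : ℤ) : Set ℂ := Nbd k i j \ Cset 𝒰

lemma grid_finite (k : ℕ) (q : ℂ) (R : ℝ) :
    {c : ℂ | (∃ m : ℤ, c.re = (m:ℝ) * d k) ∧ (∃ n : ℤ, c.im = (n:ℝ) * d k) ∧
      dist c q ≤ R}.Finite := by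
  have hd := d_pos k
  apply Set.Finite.subset
    (Set.Finite.image (fun p : ℤ × ℤ => (⟨(p.1:ℝ) * d k, (p.2:ℝ) * d k⟩ : ℂ))
      ((Set.finite_Icc ⌈(q.re - R)/d k⌉ ⌊(q.re + R)/d k⌋).prod
        (Set.finite_Icc ⌈(q.im - R)/d k⌉ ⌊(q.im + R)/d k⌋)))
  rintro c ⟨⟨m, hm⟩, ⟨n, hn⟩, hdist⟩
  have hre : |c.re - q.re| ≤ R := by
    calc |c.re - q.re| = |(c - q).re| := by rw [Complex.sub_re]
    _ ≤ ‖c - q‖ := Complex.abs_re_le_norm _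
    _ = dist c q := (Complex.dist_eq c q).symm
    _ ≤ R := hdist
  have him : |c.im - q.im| ≤ R := by
    calc |c.im - q.im| = |(c - q).im| := by rw [Complex.sub_im]
    _ ≤ ‖c - q‖ := Complex.abs_im_le_norm _
    _ = dist c q := (Complex.dist_eq c q).symm
    _ ≤ R := hdist
  rw [abs_le] at hre him
  refine ⟨(m, n), ⟨?_, ?_⟩, ?_⟩
  · simp only [Set.mem_Icc]
    constructor
    · rw [Int.ceil_le, div_le_iff₀ hd]
      rw [hm] at hre; linarith [hre.1]
    · rw [Int.le_floor, le_div_iff₀ hd]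
      rw [hm] at hre; linarith [hre.2]
  · simp only [Set.mem_Icc]
    constructor
    · rw [Int.ceil_le, div_le_iff₀ hd]
      rw [hn] at him; linarith [him.1]
    · rw [Int.le_floor, le_div_iff₀ hd]
      rw [hn] at him; linarith [him.2]
  · show ({ re := (m:ℝ) * d k, im := (n:ℝ) * d k } : ℂ) = c
    exact Complex.ext hm.symm hn.symm

/-- radius bound at a corner -/
lemma rad_corner_bounds {c : ℂ} (hc : c ∈ Corners 𝒰) :
    20 * d (Kc 𝒰 c) < rad 𝒰 c ∧ rad 𝒰 c ≤ 44 * d (Kc 𝒰 c) := by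
  obtain ⟨i, j, hsel, hcor⟩ := Kc_spec hc
  constructor
  · exact hsel.1 c (corner_mem hcor)
  · obtain ⟨w, hwr, hwd⟩ := sel_bad_point hsel
    have h1 : dist c w ≤ 4 * d (Kc 𝒰 c) := hwd c (corner_mem hcor)
    have := rad_le_rad_add_dist (𝒰 := 𝒰) (z := c) (w := w)
    linarith

/-- local finiteness of the family of corner disks -/
lemma corner_disks_locally_finite {q : ℂ} (hq : 0 < rad 𝒰 q) :
    {c : ℂ | c ∈ Corners 𝒰 ∧
      (Metric.closedBall c (3 * rho 𝒰 c) ∩ Metric.ball q (rad 𝒰 q / 100)).Nonempty}.Finite := by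
  set r := rad 𝒰 q with hr
  obtain ⟨Nk, hNk⟩ := exists_d_lt (show 0 < r/45 by linarith)
  have key : ∀ c, c ∈ Corners 𝒰 →
      (Metric.closedBall c (3 * rho 𝒰 c) ∩ Metric.ball q (r / 100)).Nonempty →
      (r/45 ≤ d (Kc 𝒰 c) ∧ d (Kc 𝒰 c) ≤ r/19) ∧ dist c q ≤ r/2 := by
    intro c hcC ⟨x, hx1, hx2⟩
    rw [Metric.mem_closedBall] at hx1
    rw [Metric.mem_ball] at hx2
    set K := Kc 𝒰 c
    have hdK := d_pos K
    have hρ : rho 𝒰 c = d K / 10^5 := rfl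
    have hdcq : dist c q ≤ 3 * (d K / 10^5) + r/100 := by
      have := dist_triangle c x q
      rw [dist_comm c x] at this
      rw [hρ] at hx1
      linarith
    obtain ⟨hrc1, hrc2⟩ := rad_corner_bounds hcC
    have hlip1 : rad 𝒰 q ≤ rad 𝒰 c + dist q c := rad_le_rad_add_dist
    have hlip2 : rad 𝒰 c ≤ rad 𝒰 q + dist c q := rad_le_rad_add_dist
    rw [dist_comm q c] at hlip1
    have hK1 : r/45 ≤ d K := by linarith
    have hK2 : d K ≤ r/19 := by linarith
    refine ⟨⟨hK1, hK2⟩, by linarith⟩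
  have hsub : {c : ℂ | c ∈ Corners 𝒰 ∧
      (Metric.closedBall c (3 * rho 𝒰 c) ∩ Metric.ball q (r / 100)).Nonempty} ⊆
      ⋃ k ∈ {k : ℕ | k < Nk},
        {c : ℂ | (∃ m : ℤ, c.re = (m:ℝ) * d k) ∧ (∃ n : ℤ, c.im = (n:ℝ) * d k) ∧
          dist c q ≤ r/2} := by
    rintro c ⟨hcC, hne⟩
    obtain ⟨⟨hK1, hK2⟩, hdist⟩ := key c hcC hne
    obtain ⟨i, j, hsel, hcor⟩ := Kc_spec hcC
    have hkN : Kc 𝒰 c < Nk := by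
      by_contra hcon
      push_neg at hcon
      have := d_anti hcon
      linarith
    refine Set.mem_biUnion hkN ?_
    obtain ⟨h1, h2⟩ := corner_grid hcor
    exact ⟨h1, h2, hdist⟩
  exact Set.Finite.subset
    (Set.Finite.biUnion (Set.finite_lt_nat Nk) (fun k _ => grid_finite k q (r/2))) hsub

lemma rad_pos_of_mem_nbd {k : ℕ} {i j : ℤ} (hg : Good 𝒰 k i j) {q : ℂ}
    (hq : q ∈ Nbd k i j) : 19 * d k ≤ rad 𝒰 q := by
  obtain ⟨u, hu, hud⟩ := clamp_mem hq
  have h1 := hg u hu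
  have h2 : rad 𝒰 u ≤ rad 𝒰 q + dist u q := rad_le_rad_add_dist
  rw [dist_comm u q] at h2
  have := d_pos k
  linarith

lemma isOpen_Tset {k : ℕ} {i j : ℤ} (hsel : Sel 𝒰 k i j) : IsOpen (Tset 𝒰 k i j) := by
  rw [Metric.isOpen_iff]
  rintro q ⟨hqN, hqC⟩
  have hd := d_pos k
  have hrq : 0 < rad 𝒰 q := lt_of_lt_of_le (by linarith) (rad_pos_of_mem_nbd hsel.1 hqN)
  have hfin := corner_disks_locally_finite (𝒰 := 𝒰) hrq
  set F := {c : ℂ | c ∈ Corners 𝒰 ∧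
      (Metric.closedBall c (3 * rho 𝒰 c) ∩ Metric.ball q (rad 𝒰 q / 100)).Nonempty}
  have hS : IsClosed (⋃ c ∈ F, Metric.closedBall c (3 * rho 𝒰 c)) :=
    Set.Finite.isClosed_biUnion hfin (fun c _ => Metric.isClosed_closedBall)
  have hqS : q ∉ ⋃ c ∈ F, Metric.closedBall c (3 * rho 𝒰 c) := by
    intro hin
    obtain ⟨c, hcF, hqc⟩ := Set.mem_iUnion₂.mp hin
    exact hqC (Set.mem_biUnion hcF.1 hqc)
  obtain ⟨ε₁, hε₁, hball₁⟩ := Metric.mem_nhds_iff.mp (hS.isOpen_compl.mem_nhds hqS)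
  obtain ⟨ε₂, hε₂, hball₂⟩ := Metric.mem_nhds_iff.mp ((isOpen_nbd k i j).mem_nhds hqN)
  refine ⟨min (min ε₁ ε₂) (rad 𝒰 q / 100), by positivity, ?_⟩
  intro y hy
  rw [Metric.mem_ball] at hy
  have hy1 : y ∈ Metric.ball q ε₁ := by
    rw [Metric.mem_ball]
    exact lt_of_lt_of_le hy (le_trans (min_le_left _ _) (min_le_left _ _))
  have hy2 : y ∈ Metric.ball q ε₂ := by
    rw [Metric.mem_ball]
    exact lt_of_lt_of_le hy (le_trans (min_le_left _ _) (min_le_right _ _))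
  have hy3 : y ∈ Metric.ball q (rad 𝒰 q / 100) := by
    rw [Metric.mem_ball]
    exact lt_of_lt_of_le hy (min_le_right _ _)
  refine ⟨hball₂ hy2, ?_⟩
  intro hyC
  obtain ⟨c, hcC, hyc⟩ := Set.mem_iUnion₂.mp hyC
  have hcF : c ∈ F := ⟨hcC, ⟨y, hyc, hy3⟩⟩
  exact (hball₁ hy1) (Set.mem_biUnion hcF hyc)

/-! ### Conjugation equivariance -/

lemma conj_mem_iff_image {S : Set ℂ} {z : ℂ} :
    z ∈ (starRingEnd ℂ) '' S ↔ (starRingEnd ℂ) z ∈ S := by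
  constructor
  · rintro ⟨u, hu, rfl⟩
    rwa [Complex.conj_conj]
  · intro h
    exact ⟨(starRingEnd ℂ) z, h, Complex.conj_conj z⟩

lemma conj_image_eq_preimage (S : Set ℂ) :
    (starRingEnd ℂ) '' S = (starRingEnd ℂ) ⁻¹' S := by
  ext z
  rw [conj_mem_iff_image, Set.mem_preimage]

lemma conj_conj_image (S : Set ℂ) :
    (starRingEnd ℂ) '' ((starRingEnd ℂ) '' S) = S := by
  ext z
  rw [conj_mem_iff_image, conj_mem_iff_image, Complex.conj_conj]

lemma isOpen_conj_image {S : Set ℂ} (h : IsOpen S) : IsOpen ((starRingEnd ℂ) '' S) := by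
  rw [conj_image_eq_preimage]
  exact h.preimage Complex.continuous_conj

lemma conj_mem_sq {z : ℂ} {k : ℕ} {i j : ℤ} :
    (starRingEnd ℂ) z ∈ sq k i j ↔ z ∈ sq k i (-j-1) := by
  simp only [sq, mem_setOf_eq, Complex.conj_re, Complex.conj_im]
  push_cast
  constructor <;> rintro ⟨h1, h2, h3, h4⟩ <;>
    exact ⟨h1, h2, by linarith, by linarith⟩

lemma conj_mem_nbd {z : ℂ} {k : ℕ} {i j : ℤ} :
    (starRingEnd ℂ) z ∈ Nbd k i j ↔ z ∈ Nbd k i (-j-1) := by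
  simp only [Nbd, mem_setOf_eq, Complex.conj_re, Complex.conj_im]
  push_cast
  constructor <;> rintro ⟨h1, h2, h3, h4⟩ <;>
    exact ⟨h1, h2, by linarith, by linarith⟩

variable {𝒰 : Set (Set ℂ)}

lemma good_conj (hUsym : ∀ U ∈ 𝒰, (starRingEnd ℂ) '' U = U) {k : ℕ} {i j : ℤ}
    (h : Good 𝒰 k i j) : Good 𝒰 k i (-j-1) := by
  intro w hw
  have hmem : (starRingEnd ℂ) w ∈ sq k i j := by
    rw [conj_mem_sq]
    exact hw
  have := h _ hmem
  rwa [rad_conj hUsym] at this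

lemma neg_neg_id (j : ℤ) : -(-j-1)-1 = j := by ring

lemma sel_conj (hUsym : ∀ U ∈ 𝒰, (starRingEnd ℂ) '' U = U) {k : ℕ} {i j : ℤ}
    (h : Sel 𝒰 k i j) : Sel 𝒰 k i (-j-1) := by
  refine ⟨good_conj hUsym h.1, ?_⟩
  intro i' j' hsub hgood
  have hsub' : sq k i j ⊆ sq (k-1) i' (-j'-1) := by
    intro w hw
    have h1 : (starRingEnd ℂ) w ∈ sq k i (-j-1) := by
      rw [conj_mem_sq, neg_neg_id]
      exact hw
    have h2 := hsub h1
    rw [conj_mem_sq] at h2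
    exact h2
  exact h.2 i' (-j'-1) hsub' (good_conj hUsym hgood)

lemma conj_isCorner {c : ℂ} {k : ℕ} {i j : ℤ} :
    isCorner ((starRingEnd ℂ) c) k i (-j-1) ↔ isCorner c k i j := by
  simp only [isCorner, Complex.conj_re, Complex.conj_im]
  push_cast
  constructor
  · rintro ⟨h1, h2⟩
    refine ⟨h1, ?_⟩
    rcases h2 with h | h
    · right; linarith
    · left; linarith
  · rintro ⟨h1, h2⟩
    refine ⟨h1, ?_⟩
    rcases h2 with h | h
    · right; linarith
    · left; linarith

lemma cornerScales_conj (hUsym : ∀ U ∈ 𝒰, (starRingEnd ℂ) '' U = U) (c : ℂ) :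
    cornerScales 𝒰 ((starRingEnd ℂ) c) = cornerScales 𝒰 c := by
  have key : ∀ w : ℂ, cornerScales 𝒰 w ⊆ cornerScales 𝒰 ((starRingEnd ℂ) w) := by
    rintro w k ⟨i, j, hsel, hcor⟩
    refine ⟨i, -j-1, sel_conj hUsym hsel, ?_⟩
    rw [conj_isCorner]
    exact hcor
  apply le_antisymm
  · have := key ((starRingEnd ℂ) c)
    rwa [Complex.conj_conj] at this
  · exact key c

lemma Kc_conj (hUsym : ∀ U ∈ 𝒰, (starRingEnd ℂ) '' U = U) (c : ℂ) :
    Kc 𝒰 ((starRingEnd ℂ) c) = Kc 𝒰 c := by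
  unfold Kc
  rw [cornerScales_conj hUsym]

lemma rho_conj (hUsym : ∀ U ∈ 𝒰, (starRingEnd ℂ) '' U = U) (c : ℂ) :
    rho 𝒰 ((starRingEnd ℂ) c) = rho 𝒰 c := by
  unfold rho
  rw [Kc_conj hUsym]

lemma corners_conj (hUsym : ∀ U ∈ 𝒰, (starRingEnd ℂ) '' U = U) {c : ℂ} :
    (starRingEnd ℂ) c ∈ Corners 𝒰 ↔ c ∈ Corners 𝒰 := by
  unfold Corners
  simp only [mem_setOf_eq]
  rw [cornerScales_conj hUsym]

lemma dist_conj_right (z c : ℂ) : dist z ((starRingEnd ℂ) c) = dist ((starRingEnd ℂ) z) c := by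
  rw [← Complex.dist_conj_conj z ((starRingEnd ℂ) c), Complex.conj_conj]

lemma conj_mem_Cset (hUsym : ∀ U ∈ 𝒰, (starRingEnd ℂ) '' U = U) {z : ℂ} :
    (starRingEnd ℂ) z ∈ Cset 𝒰 ↔ z ∈ Cset 𝒰 := by
  have key : ∀ w : ℂ, w ∈ Cset 𝒰 → (starRingEnd ℂ) w ∈ Cset 𝒰 := by
    intro w hw
    obtain ⟨c, hc, hwc⟩ := Set.mem_iUnion₂.mp hw
    apply Set.mem_biUnion ((corners_conj hUsym).mpr hc)
    rw [Metric.mem_closedBall] at hwc ⊢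
    rw [rho_conj hUsym, ← dist_conj_right, Complex.conj_conj]
    rw [dist_comm] at hwc
    rw [dist_comm]
    exact hwc
  constructor
  · intro h
    have := key _ h
    rwa [Complex.conj_conj] at this
  · exact key z

lemma conj_image_Tset (hUsym : ∀ U ∈ 𝒰, (starRingEnd ℂ) '' U = U) (k : ℕ) (i j : ℤ) :
    (starRingEnd ℂ) '' Tset 𝒰 k i j = Tset 𝒰 k i (-j-1) := by
  ext z
  rw [conj_mem_iff_image]
  unfold Tset
  constructor
  · rintro ⟨h1, h2⟩
    rw [conj_mem_nbd] at h1
    rw [conj_mem_Cset hUsym] at h2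
    exact ⟨h1, h2⟩
  · rintro ⟨h1, h2⟩
    rw [← conj_mem_nbd] at h1
    rw [← conj_mem_Cset hUsym (z := z)] at h2
    exact ⟨h1, h2⟩

lemma conj_image_ball (c : ℂ) (R : ℝ) :
    (starRingEnd ℂ) '' Metric.ball c R = Metric.ball ((starRingEnd ℂ) c) R :=
  (conj_ball c R).symm

end

end SymRefAux

open SymRefAux

/-- Every symmetric open covering of a nonempty symmetric open set `D ⊆ ℂ` admits a
symmetric open refinement of order at most `3`: no four pairwise distinct members of
the refinement have a common point. -/
theorem symmetric_refinement_order_three (D : Set ℂ)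
    (hne : D.Nonempty) (hopen : IsOpen D) (hsym : (starRingEnd ℂ) '' D = D)
    (𝒰 : Set (Set ℂ))
    (hUopen : ∀ U ∈ 𝒰, IsOpen U) (hUsym : ∀ U ∈ 𝒰, (starRingEnd ℂ) '' U = U)
    (hUcover : D ⊆ ⋃₀ 𝒰) :
    ∃ 𝒱 : Set (Set ℂ),
      (∀ V ∈ 𝒱, IsOpen V) ∧
      (∀ V ∈ 𝒱, (starRingEnd ℂ) '' V = V) ∧
      D ⊆ ⋃₀ 𝒱 ∧
      (∀ V ∈ 𝒱, ∃ U ∈ 𝒰, V ⊆ U) ∧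
      (∀ V₁ ∈ 𝒱, ∀ V₂ ∈ 𝒱, ∀ V₃ ∈ 𝒱, ∀ V₄ ∈ 𝒱,
        V₁ ≠ V₂ → V₁ ≠ V₃ → V₁ ≠ V₄ → V₂ ≠ V₃ → V₂ ≠ V₄ → V₃ ≠ V₄ →
        V₁ ∩ V₂ ∩ V₃ ∩ V₄ = ∅) := by
  classical
  refine ⟨{V | ∃ k i j, Sel 𝒰 k i j ∧
      V = Tset 𝒰 k i j ∪ (starRingEnd ℂ) '' Tset 𝒰 k i j} ∪
    {V | ∃ c, c ∈ Corners 𝒰 ∧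
      V = Metric.ball c (4 * rho 𝒰 c) ∪ (starRingEnd ℂ) '' Metric.ball c (4 * rho 𝒰 c)},
    ?_, ?_, ?_, ?_, ?_⟩
  -- openness
  · rintro V (⟨k, i, j, hsel, rfl⟩ | ⟨c, hc, rfl⟩)
    · exact (isOpen_Tset hsel).union (isOpen_conj_image (isOpen_Tset hsel))
    · exact Metric.isOpen_ball.union (isOpen_conj_image Metric.isOpen_ball)
  -- symmetry
  · rintro V (⟨k, i, j, hsel, rfl⟩ | ⟨c, hc, rfl⟩)
    · rw [Set.image_union, conj_conj_image, Set.union_comm]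
    · rw [Set.image_union, conj_conj_image, Set.union_comm]
  -- coverage
  · intro z hz
    have hrad : 0 < rad 𝒰 z := by
      obtain ⟨U, hU, hzU⟩ := hUcover hz
      obtain ⟨ε, hε, hball⟩ := Metric.isOpen_iff.mp (hUopen U hU) z hzU
      have h1 : min ε 1 ≤ rad 𝒰 z := le_rad (min_le_right _ _)
        ⟨U, hU, (Metric.ball_subset_ball (min_le_left _ _)).trans hball⟩
      have h2 : 0 < min ε 1 := lt_min hε one_pos
      linarith
    obtain ⟨k, i, j, hsel, hmem⟩ := exists_sel_mem hrad
    by_cases hzC : z ∈ Cset 𝒰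
    · obtain ⟨c, hc, hzc⟩ := Set.mem_iUnion₂.mp hzC
      refine ⟨Metric.ball c (4 * rho 𝒰 c) ∪ (starRingEnd ℂ) '' Metric.ball c (4 * rho 𝒰 c),
        Or.inr ⟨c, hc, rfl⟩, Or.inl ?_⟩
      rw [Metric.mem_closedBall] at hzc
      rw [Metric.mem_ball]
      have := rho_pos (𝒰 := 𝒰) c
      linarith
    · exact ⟨Tset 𝒰 k i j ∪ (starRingEnd ℂ) '' Tset 𝒰 k i j,
        Or.inl ⟨k, i, j, hsel, rfl⟩, Or.inl ⟨sq_subset_nbd hmem, hzC⟩⟩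
  -- refinement
  · rintro V (⟨k, i, j, hsel, rfl⟩ | ⟨c, hc, rfl⟩)
    · obtain ⟨U, hU, hball⟩ := good_ball_subset hsel.1 (corner_mem_sq (k := k) (i := i) (j := j))
      refine ⟨U, hU, ?_⟩
      have hd := d_pos k
      have hNb : Nbd k i j ⊆ Metric.ball (⟨(i:ℝ) * d k, (j:ℝ) * d k⟩ : ℂ) (10 * d k) := by
        rintro w ⟨a1, a2, a3, a4⟩
        rw [Metric.mem_ball]
        have e1 : |w.re - (i:ℝ) * d k| ≤ 2 * d k := by
          rw [abs_le]; constructor <;> [linarith; nlinarith]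
        have e2 : |w.im - (j:ℝ) * d k| ≤ 2 * d k := by
          rw [abs_le]; constructor <;> [linarith; nlinarith]
        calc dist w (⟨(i:ℝ) * d k, (j:ℝ) * d k⟩ : ℂ)
            ≤ |w.re - (i:ℝ) * d k| + |w.im - (j:ℝ) * d k| := dist_le_re_im _ _
        _ ≤ 4 * d k := by linarith
        _ < 10 * d k := by linarith
      have hTU : Tset 𝒰 k i j ⊆ U := fun w hw => hball (hNb hw.1)
      rintro w (hw | hw)
      · exact hTU hw
      · rw [conj_mem_iff_image] at hw
        rw [← hUsym U hU, conj_mem_iff_image]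
        exact hTU hw
    · obtain ⟨i, j, hsel, hcor⟩ := Kc_spec hc
      obtain ⟨U, hU, hball⟩ := good_ball_subset hsel.1 (corner_mem hcor)
      refine ⟨U, hU, ?_⟩
      have hd := d_pos (Kc 𝒰 c)
      have hsub : Metric.ball c (4 * rho 𝒰 c) ⊆ U := by
        refine (Metric.ball_subset_ball ?_).trans hball
        unfold rho
        linarith
      rintro w (hw | hw)
      · exact hsub hw
      · rw [conj_mem_iff_image] at hw
        rw [← hUsym U hU, conj_mem_iff_image]
        exact hsub hw
  -- order at most 3
  · intro V₁ hV₁ V₂ hV₂ V₃ hV₃ V₄ hV₄ h12 h13 h14 h23 h24 h34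
    rw [Set.eq_empty_iff_forall_notMem]
    rintro z ⟨⟨⟨hz1, hz2⟩, hz3⟩, hz4⟩
    -- canonical witnesses
    have hwit : ∀ V, (V ∈ {V | ∃ k i j, Sel 𝒰 k i j ∧
          V = Tset 𝒰 k i j ∪ (starRingEnd ℂ) '' Tset 𝒰 k i j} ∪
        {V | ∃ c, c ∈ Corners 𝒰 ∧
          V = Metric.ball c (4 * rho 𝒰 c) ∪ (starRingEnd ℂ) '' Metric.ball c (4 * rho 𝒰 c)}) →
        z ∈ V →
        (∃ k i j, Sel 𝒰 k i j ∧ z ∈ Tset 𝒰 k i j ∧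
          V = Tset 𝒰 k i j ∪ (starRingEnd ℂ) '' Tset 𝒰 k i j) ∨
        (∃ c, c ∈ Corners 𝒰 ∧ z ∈ Metric.ball c (4 * rho 𝒰 c) ∧
          V = Metric.ball c (4 * rho 𝒰 c) ∪ (starRingEnd ℂ) '' Metric.ball c (4 * rho 𝒰 c)) := by
      rintro V (⟨k, i, j, hsel, rfl⟩ | ⟨c, hc, rfl⟩) hzV
      · rcases hzV with hw | hw
        · exact Or.inl ⟨k, i, j, hsel, hw, rfl⟩
        · rw [conj_image_Tset hUsym] at hw
          refine Or.inl ⟨k, i, -j-1, sel_conj hUsym hsel, hw, ?_⟩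
          rw [conj_image_Tset hUsym, conj_image_Tset hUsym, neg_neg_id, Set.union_comm]
      · rcases hzV with hw | hw
        · exact Or.inr ⟨c, hc, hw, rfl⟩
        · rw [conj_image_ball] at hw
          refine Or.inr ⟨(starRingEnd ℂ) c, (corners_conj hUsym).mpr hc, ?_, ?_⟩
          · rwa [rho_conj hUsym]
          · rw [rho_conj hUsym, conj_image_ball, conj_image_ball, Complex.conj_conj,
              Set.union_comm]
    -- two corner members are impossible
    have corner2 : ∀ {Va Vb : Set ℂ}, Va ≠ Vb →
        (∃ c, c ∈ Corners 𝒰 ∧ z ∈ Metric.ball c (4 * rho 𝒰 c) ∧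
          Va = Metric.ball c (4 * rho 𝒰 c) ∪ (starRingEnd ℂ) '' Metric.ball c (4 * rho 𝒰 c)) →
        (∃ c, c ∈ Corners 𝒰 ∧ z ∈ Metric.ball c (4 * rho 𝒰 c) ∧
          Vb = Metric.ball c (4 * rho 𝒰 c) ∪ (starRingEnd ℂ) '' Metric.ball c (4 * rho 𝒰 c)) →
        False := by
      rintro Va Vb hab ⟨c, hc, hzc, rfl⟩ ⟨c', hc', hzc', rfl⟩
      rcases eq_or_ne c c' with rfl | hcc
      · exact hab rfl
      · exact delta_disjoint hc hc' hcc (Metric.mem_ball.mp hzc) (Metric.mem_ball.mp hzc')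
    -- three cell members are impossible
    have cell3 : ∀ {Va Vb Vc : Set ℂ}, Va ≠ Vb → Va ≠ Vc → Vb ≠ Vc →
        (∃ k i j, Sel 𝒰 k i j ∧ z ∈ Tset 𝒰 k i j ∧
          Va = Tset 𝒰 k i j ∪ (starRingEnd ℂ) '' Tset 𝒰 k i j) →
        (∃ k i j, Sel 𝒰 k i j ∧ z ∈ Tset 𝒰 k i j ∧
          Vb = Tset 𝒰 k i j ∪ (starRingEnd ℂ) '' Tset 𝒰 k i j) →
        (∃ k i j, Sel 𝒰 k i j ∧ z ∈ Tset 𝒰 k i j ∧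
          Vc = Tset 𝒰 k i j ∪ (starRingEnd ℂ) '' Tset 𝒰 k i j) →
        False := by
      rintro Va Vb Vc hab hac hbc ⟨ka, ia, ja, hsa, hza, rfl⟩ ⟨kb, ib, jb, hsb, hzb, rfl⟩
        ⟨kc, ic, jc, hsc, hzc, rfl⟩
      have dab : ¬(ka = kb ∧ ia = ib ∧ ja = jb) := by
        rintro ⟨rfl, rfl, rfl⟩; exact hab rfl
      have dac : ¬(ka = kc ∧ ia = ic ∧ ja = jc) := by
        rintro ⟨rfl, rfl, rfl⟩; exact hac rfl
      have dbc : ¬(kb = kc ∧ ib = ic ∧ jb = jc) := by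
        rintro ⟨rfl, rfl, rfl⟩; exact hbc rfl
      obtain ⟨p, hp, hdist⟩ := crux (𝒰 := 𝒰) (kf := ![ka, kb, kc]) (if' := ![ia, ib, ic])
        (jf := ![ja, jb, jc])
        (by intro m; fin_cases m <;> first | exact hsa | exact hsb | exact hsc)
        (by
          intro m m' hmm
          fin_cases m <;> fin_cases m' <;>
            first
              | exact absurd rfl hmm
              | exact dab
              | exact dac
              | exact dbc
              | exact fun h => dab ⟨h.1.symm, h.2.1.symm, h.2.2.symm⟩
              | exact fun h => dac ⟨h.1.symm, h.2.1.symm, h.2.2.symm⟩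
              | exact fun h => dbc ⟨h.1.symm, h.2.1.symm, h.2.2.symm⟩)
        (q := z)
        (by intro m; fin_cases m <;> first | exact hza.1 | exact hzb.1 | exact hzc.1)
      exact hza.2 (Set.mem_biUnion hp (Metric.mem_closedBall.mpr hdist))
    have w1 := hwit V₁ hV₁ hz1
    have w2 := hwit V₂ hV₂ hz2
    have w3 := hwit V₃ hV₃ hz3
    have w4 := hwit V₄ hV₄ hz4
    rcases w1 with h1 | h1 <;> rcases w2 with h2 | h2 <;> rcases w3 with h3 | h3 <;>
      rcases w4 with h4 | h4 <;>
      first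
        | exact corner2 h12 h1 h2
        | exact corner2 h13 h1 h3
        | exact corner2 h14 h1 h4
        | exact corner2 h23 h2 h3
        | exact corner2 h24 h2 h4
        | exact corner2 h34 h3 h4
        | exact cell3 h12 h13 h23 h1 h2 h3
        | exact cell3 h12 h14 h24 h1 h2 h4
        | exact cell3 h13 h14 h34 h1 h3 h4
        | exact cell3 h23 h24 h34 h2 h3 h4
end

section
/- Let D ⊆ ℂ be a symmetric, open, connected and simply connected set. Then D ∩ ℝ is connected (i.e. it is an interval, possibly empty). -/
open Set

private lemma exp_im_lattice {z w : ℂ} (h : Complex.exp z = Complex.exp w) :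
    ∃ m : ℤ, z.im = w.im + 2 * Real.pi * m := by
  obtain ⟨n, hn⟩ := Complex.exp_eq_exp_iff_exists_int.mp h
  refine ⟨n, ?_⟩
  rw [hn]
  simp [Complex.add_im, Complex.mul_im]
  ring

private lemma im_lattice_false {X : Type*} [TopologicalSpace X] [PreconnectedSpace X]
    {φ : X → ℝ} (hφ : Continuous φ) {θ : ℝ} (hv : ∀ s, ∃ m : ℤ, φ s = θ + 2 * Real.pi * m)
    {x y : X} (hlt : φ x < φ y) : False := by
  obtain ⟨mx, hx⟩ := hv x
  obtain ⟨my, hy⟩ := hv y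
  have hπ := Real.pi_pos
  have hm : mx < my := by
    by_contra hc
    push_neg at hc
    have : (my : ℝ) ≤ (mx : ℝ) := by exact_mod_cast hc
    nlinarith
  have hm1 : (mx : ℝ) + 1 ≤ (my : ℝ) := by exact_mod_cast hm
  have hmem : φ x + Real.pi ∈ Set.Icc (φ x) (φ y) := ⟨by linarith, by nlinarith⟩
  obtain ⟨s, hs⟩ := intermediate_value_univ x y hφ hmem
  obtain ⟨m, hms⟩ := hv s
  rw [hs, hx] at hms
  have h2 : Real.pi * (2 * (m : ℝ) - 2 * (mx : ℝ) - 1) = 0 := by ring_nf; nlinarith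
  have h3 : (2 * (m : ℝ) - 2 * (mx : ℝ) - 1) = 0 := by
    rcases mul_eq_zero.mp h2 with h | h
    · exact absurd h (ne_of_gt hπ)
    · exact h
  have h4 : (2 * m - 2 * mx - 1 : ℤ) = 0 := by exact_mod_cast h3
  omega

private lemma im_lattice_eq {X : Type*} [TopologicalSpace X] [PreconnectedSpace X]
    {φ : X → ℝ} (hφ : Continuous φ) {θ : ℝ} (hv : ∀ s, ∃ m : ℤ, φ s = θ + 2 * Real.pi * m)
    (x y : X) : φ x = φ y := by
  by_contra hne
  rcases lt_or_gt_of_ne hne with h | h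
  · exact im_lattice_false hφ hv h
  · exact im_lattice_false hφ hv h

/-- A uniformly continuous nonvanishing function on `ℝ²` has a continuous logarithm
on the ball of radius 2 (and a pointwise logarithm everywhere). -/
private lemma exists_cont_log (F : ℝ × ℝ → ℂ) (hF : UniformContinuous F)
    (hF0 : ∀ p, F p ≠ 0) :
    ∃ L : ℝ × ℝ → ℂ, (∀ p : ℝ × ℝ, ‖p‖ < 2 → ContinuousAt L p) ∧
      ∀ p, Complex.exp (L p) = F p := by
  obtain ⟨q, hq, hqmin'⟩ := (isCompact_closedBall (0 : ℝ × ℝ) 2).exists_isMinOn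
    ⟨0, by simp⟩ (hF.continuous.norm.continuousOn)
  have hqmin : ∀ y ∈ Metric.closedBall (0 : ℝ × ℝ) 2, ‖F q‖ ≤ ‖F y‖ := fun y hy => hqmin' hy
  set ε := ‖F q‖ with hε
  have hε0 : 0 < ε := norm_pos_iff.mpr (hF0 q)
  obtain ⟨δ, hδ0, hδ⟩ := Metric.uniformContinuous_iff.mp hF ε hε0
  obtain ⟨n, hn⟩ := exists_nat_gt (2 / δ)
  have hn0 : 0 < (n : ℝ) := lt_of_le_of_lt (by positivity) hn
  have h2n : 2 / (n : ℝ) < δ := by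
    rw [div_lt_iff₀ hn0]
    have := (div_lt_iff₀ hδ0).mp hn
    linarith
  set u : ℕ → ℝ := fun k => (k : ℝ) / n with hu
  have hu01 : ∀ k : ℕ, k ≤ n → 0 ≤ u k ∧ u k ≤ 1 := by
    intro k hk
    constructor
    · positivity
    · rw [hu]; rw [div_le_one hn0]; exact_mod_cast hk
  have hmem : ∀ k : ℕ, k ≤ n → ∀ p : ℝ × ℝ, ‖p‖ < 2 →
      (u k • p) ∈ Metric.closedBall (0 : ℝ × ℝ) 2 := by
    intro k hk p hp
    rw [Metric.mem_closedBall, dist_zero_right, norm_smul, Real.norm_eq_abs,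
      abs_of_nonneg (hu01 k hk).1]
    nlinarith [(hu01 k hk).1, (hu01 k hk).2, norm_nonneg p]
  have hstep : ∀ k : ℕ, ∀ p : ℝ × ℝ, ‖p‖ < 2 → dist (u (k + 1) • p) (u k • p) < δ := by
    intro k p hp
    rw [dist_eq_norm, ← sub_smul]
    have h1 : u (k + 1) - u k = 1 / (n : ℝ) := by
      rw [hu]; push_cast; field_simp; ring
    rw [h1, norm_smul, Real.norm_eq_abs, abs_of_nonneg (by positivity)]
    calc 1 / (n : ℝ) * ‖p‖ ≤ 1 / (n : ℝ) * 2 := by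
          apply mul_le_mul_of_nonneg_left hp.le (by positivity)
      _ = 2 / n := by ring
      _ < δ := h2n
  have hratio : ∀ k : ℕ, k < n → ∀ p : ℝ × ℝ, ‖p‖ < 2 →
      ‖F (u (k + 1) • p) / F (u k • p) - 1‖ < 1 := by
    intro k hk p hp
    have hb := hF0 (u k • p)
    rw [div_sub_one hb, norm_div, div_lt_one (norm_pos_iff.mpr hb)]
    have h1 : ‖F (u (k + 1) • p) - F (u k • p)‖ < ε := by
      have := hδ (hstep k p hp)
      rwa [dist_eq_norm] at this
    have h2 : ε ≤ ‖F (u k • p)‖ := hqmin _ (hmem k hk.le p hp)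
    linarith
  refine ⟨fun p => Complex.log (F 0) +
    ∑ k ∈ Finset.range n, Complex.log (F (u (k + 1) • p) / F (u k • p)), ?_, ?_⟩
  · intro p hp
    apply ContinuousAt.add continuousAt_const
    have hterm : ∀ k ∈ Finset.range n,
        ContinuousAt (fun p : ℝ × ℝ =>
          Complex.log (F (u (k + 1) • p) / F (u k • p))) p := by
      intro k hk
      rw [Finset.mem_range] at hk
      have hinner : ContinuousAt (fun p : ℝ × ℝ => F (u (k + 1) • p) / F (u k • p)) p := by
        apply ContinuousAt.div
        · exact (hF.continuous.comp (continuous_const_smul _)).continuousAt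
        · exact (hF.continuous.comp (continuous_const_smul _)).continuousAt
        · exact hF0 _
      have hw := hratio k hk p hp
      set w := F (u (k + 1) • p) / F (u k • p) with hwdef
      have hre : 0 < w.re := by
        have h1 : |(w - 1).re| ≤ ‖w - 1‖ := Complex.abs_re_le_norm _
        have h2 : (w - 1).re = w.re - 1 := by simp
        rw [h2] at h1
        have := abs_lt.mp (lt_of_le_of_lt h1 hw)
        linarith [this.1]
      exact hinner.clog (Or.inl hre)
    exact tendsto_finset_sum _ hterm
  · intro p
    have key : ∀ m : ℕ, m ≤ n → Complex.exp (Complex.log (F 0) +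
        ∑ k ∈ Finset.range m, Complex.log (F (u (k + 1) • p) / F (u k • p)))
        = F (u m • p) := by
      intro m
      induction m with
      | zero =>
        intro _
        have h0 : u 0 = 0 := by simp [hu]
        simp [h0, Complex.exp_log (hF0 0)]
      | succ m ih =>
        intro hm
        rw [Finset.sum_range_succ, ← add_assoc, Complex.exp_add,
          ih (Nat.le_of_succ_le hm), Complex.exp_log (div_ne_zero (hF0 _) (hF0 _)),
          mul_comm, div_mul_cancel₀ _ (hF0 _)]
    have h1 : u n = 1 := div_self hn0.ne'
    have := key n le_rfl
    rwa [h1, one_smul] at this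

/-- The intersection of a symmetric, open, connected, simply connected subset of `ℂ`
with the real axis is connected (an interval, possibly empty). -/
theorem symmetric_simply_connected_inter_real_connected (D : Set ℂ)
    (hopen : IsOpen D) (hconn : IsConnected D) (hsc : SimplyConnectedSpace D)
    (hsym : (starRingEnd ℂ) '' D = D) :
    IsPreconnected (D ∩ {z : ℂ | z.im = 0}) := by
  haveI := hsc
  -- reduce to a statement about a subset of ℝ
  set T : Set ℝ := {x : ℝ | (x : ℂ) ∈ D} with hT
  have hTeq : D ∩ {z : ℂ | z.im = 0} = (fun x : ℝ => (x : ℂ)) '' T := by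
    ext z
    constructor
    · rintro ⟨hz, hzim⟩
      refine ⟨z.re, ?_, ?_⟩
      · show ((z.re : ℂ)) ∈ D
        have : (z.re : ℂ) = z := Complex.ext (by simp) (by simpa using hzim.symm)
        rwa [this]
      · exact Complex.ext (by simp) (by simpa using hzim.symm)
    · rintro ⟨x, hx, rfl⟩
      exact ⟨hx, by simp⟩
  rw [hTeq]
  suffices hTp : IsPreconnected T by
    exact hTp.image _ Complex.continuous_ofReal.continuousOn
  apply Set.OrdConnected.isPreconnected
  constructor
  intro a ha b hb c hc
  by_contra hcD
  have hcD : (c : ℂ) ∉ D := hcD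
  rcases eq_or_lt_of_le hc.1 with rfl | hac
  · exact hcD ha
  rcases eq_or_lt_of_le hc.2 with rfl | hcb
  · exact hcD hb
  -- conjugation maps D to itself
  have hmem : ∀ z ∈ D, (starRingEnd ℂ) z ∈ D := by
    intro z hz
    rw [← hsym]
    exact Set.mem_image_of_mem _ hz
  -- a path from a to b in D and its conjugate
  haveI : PathConnectedSpace ↥D := inferInstance
  set A : ↥D := ⟨(a : ℂ), ha⟩ with hA
  set B : ↥D := ⟨(b : ℂ), hb⟩ with hB
  obtain γ := PathConnectedSpace.somePath A B
  have hcont' : Continuous fun s : unitInterval => (starRingEnd ℂ) ((γ s : ℂ)) := by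
    exact Complex.continuous_conj.comp (continuous_subtype_val.comp γ.continuous)
  set γ' : Path A B :=
    { toFun := fun s => ⟨(starRingEnd ℂ) ((γ s : ℂ)), hmem _ (γ s).2⟩
      continuous_toFun := hcont'.subtype_mk _
      source' := by
        apply Subtype.ext
        show (starRingEnd ℂ) ((γ 0 : ℂ)) = (a : ℂ)
        rw [γ.source]
        exact Complex.conj_ofReal a
      target' := by
        apply Subtype.ext
        show (starRingEnd ℂ) ((γ 1 : ℂ)) = (b : ℂ)
        rw [γ.target]
        exact Complex.conj_ofReal b } with hγ'
  obtain ⟨H⟩ := SimplyConnectedSpace.paths_homotopic γ γ'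
  -- the function on the square, extended to ℝ² and shifted by c
  set pj : ℝ → unitInterval := Set.projIcc 0 1 zero_le_one with hpj
  set F : ℝ × ℝ → ℂ := fun p => ((H (pj p.1, pj p.2) : ℂ)) - (c : ℂ) with hF
  have hF0 : ∀ p, F p ≠ 0 := by
    intro p
    rw [hF]
    intro h
    rw [sub_eq_zero] at h
    exact hcD (h ▸ (H (pj p.1, pj p.2)).2)
  have hFuc : UniformContinuous F := by
    have h1 : UniformContinuous fun p : ℝ × ℝ => (pj p.1, pj p.2) :=
      (((LipschitzWith.projIcc zero_le_one).uniformContinuous).comp uniformContinuous_fst).prodMk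
        (((LipschitzWith.projIcc zero_le_one).uniformContinuous).comp uniformContinuous_snd)
    have h2 : UniformContinuous (H : unitInterval × unitInterval → ↥D) :=
      CompactSpace.uniformContinuous_of_continuous H.continuous
    have h3 : UniformContinuous fun d : ↥D => ((d : ℂ)) - (c : ℂ) :=
      uniformContinuous_subtype_val.sub uniformContinuous_const
    exact h3.comp (h2.comp h1)
  obtain ⟨L, hLc, hLe⟩ := exists_cont_log F hFuc hF0
  -- restrict the logarithm to the unit square
  set ι : unitInterval × unitInterval → ℝ × ℝ := fun x => ((x.1 : ℝ), (x.2 : ℝ)) with hι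
  have hιnorm : ∀ x, ‖ι x‖ < 2 := by
    intro x
    have h1 : ‖(x.1 : ℝ)‖ ≤ 1 := by
      rw [Real.norm_eq_abs, abs_le]; exact ⟨by linarith [x.1.2.1], x.1.2.2⟩
    have h2 : ‖(x.2 : ℝ)‖ ≤ 1 := by
      rw [Real.norm_eq_abs, abs_le]; exact ⟨by linarith [x.2.2.1], x.2.2.2⟩
    calc ‖ι x‖ = max ‖(x.1 : ℝ)‖ ‖(x.2 : ℝ)‖ := rfl
      _ ≤ 1 := max_le h1 h2
      _ < 2 := one_lt_two
  set G : unitInterval × unitInterval → ℂ := fun x => L (ι x) with hG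
  have hGc : Continuous G := by
    rw [continuous_iff_continuousAt]
    intro x
    exact (hLc (ι x) (hιnorm x)).comp
      ((continuous_subtype_val.fst'.prodMk continuous_subtype_val.snd').continuousAt)
  have hpjcoe : ∀ t : unitInterval, pj (t : ℝ) = t := fun t => Set.projIcc_val zero_le_one t
  have hGe : ∀ x : unitInterval × unitInterval, Complex.exp (G x) = ((H x : ℂ)) - (c : ℂ) := by
    intro x
    rw [hG, hLe (ι x), hF]
    simp only [hι, hpjcoe]
  -- key imaginary parts
  have hApos : (0:ℝ) < c - a := by linarith
  have hBpos : (0:ℝ) < b - c := by linarith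
  have hAval : ((H ((0:unitInterval), (0:unitInterval)) : ℂ)) - (c:ℂ) = ((a - c : ℝ) : ℂ) := by
    have : H ((0:unitInterval), (0:unitInterval)) = A := H.source 0
    rw [this]; push_cast [hA]; ring
  -- bottom edge : im constant
  have hbot : (G ((1:unitInterval), (0:unitInterval))).im = (G (0, 0)).im := by
    refine im_lattice_eq (φ := fun t : unitInterval => (G (t, 0)).im)
      (θ := (Complex.log ((a - c : ℝ) : ℂ)).im)
      (Complex.continuous_im.comp (hGc.comp (Continuous.prodMk continuous_id
        continuous_const))) ?_ 1 0
    intro t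
    have hexp : Complex.exp (G (t, 0)) = ((a - c : ℝ) : ℂ) := by
      rw [hGe]
      have : H ((t:unitInterval), (0:unitInterval)) = A := H.source t
      rw [this]; push_cast [hA]; ring
    have hne : ((a - c : ℝ) : ℂ) ≠ 0 := by
      simp only [ne_eq, Complex.ofReal_eq_zero]
      linarith
    exact exp_im_lattice (by rw [hexp, Complex.exp_log hne])
  -- top edge : im constant
  have htop : (G ((1:unitInterval), (1:unitInterval))).im = (G (0, 1)).im := by
    refine im_lattice_eq (φ := fun t : unitInterval => (G (t, 1)).im)
      (θ := (Complex.log ((b - c : ℝ) : ℂ)).im)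
      (Complex.continuous_im.comp (hGc.comp (Continuous.prodMk continuous_id
        continuous_const))) ?_ 1 0
    intro t
    have hexp : Complex.exp (G (t, 1)) = ((b - c : ℝ) : ℂ) := by
      rw [hGe]
      have : H ((t:unitInterval), (1:unitInterval)) = B := H.target t
      rw [this]; push_cast [hB]; ring
    have hne : ((b - c : ℝ) : ℂ) ≠ 0 := by
      simp only [ne_eq, Complex.ofReal_eq_zero]
      linarith
    exact exp_im_lattice (by rw [hexp, Complex.exp_log hne])
  -- vertical comparison using conjugation symmetry
  have hvert : (G (0, 0)).im + (G ((1:unitInterval), (0:unitInterval))).im = (G (0, 1)).im + (G ((1:unitInterval), (1:unitInterval))).im := by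
    have key : ∀ s : unitInterval,
        Complex.exp (G (0, s)) = Complex.exp ((starRingEnd ℂ) (G (1, s))) := by
      intro s
      rw [Complex.exp_conj]
      rw [hGe, hGe]
      have h0 : H ((0:unitInterval), s) = γ s := H.apply_zero s
      have h1 : H ((1:unitInterval), s) = γ' s := H.apply_one s
      rw [h0, h1]
      have : ((γ' s : ℂ)) = (starRingEnd ℂ) ((γ s : ℂ)) := rfl
      rw [this]
      rw [map_sub, Complex.conj_conj, Complex.conj_ofReal]
    have hlat : ∀ s : unitInterval, ∃ m : ℤ,
        ((G (0, s)).im + (G (1, s)).im) = 0 + 2 * Real.pi * m := by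
      intro s
      obtain ⟨m, hm⟩ := exp_im_lattice (key s)
      refine ⟨m, ?_⟩
      have : ((starRingEnd ℂ) (G (1, s))).im = -(G (1, s)).im := by simp
      rw [this] at hm
      linarith
    have := im_lattice_eq (φ := fun s : unitInterval => (G (0, s)).im + (G (1, s)).im)
      (by
        apply Continuous.add
        · exact Complex.continuous_im.comp (hGc.comp (Continuous.prodMk
            continuous_const continuous_id))
        · exact Complex.continuous_im.comp (hGc.comp (Continuous.prodMk
            continuous_const continuous_id)))
      hlat 0 1
    simpa using this
  have hαα' : (G (0, 0)).im = (G ((0:unitInterval), (1:unitInterval))).im := by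
    rw [hbot, htop] at hvert
    linarith
  -- parity contradiction
  have hexpA : Complex.exp (G (0, 0)) = ((a - c : ℝ) : ℂ) := by
    rw [hGe, hAval]
  have hexpB : Complex.exp (G (0, 1)) = ((b - c : ℝ) : ℂ) := by
    rw [hGe]
    have : H ((0:unitInterval), (1:unitInterval)) = B := H.target 0
    rw [this]; push_cast [hB]; ring
  have hAne : ((a - c : ℝ) : ℂ) ≠ 0 := by
    simp only [ne_eq, Complex.ofReal_eq_zero]; linarith
  have hBne : ((b - c : ℝ) : ℂ) ≠ 0 := by
    simp only [ne_eq, Complex.ofReal_eq_zero]; linarith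
  obtain ⟨m1, hm1⟩ := exp_im_lattice (z := G (0, 0))
    (w := Complex.log ((a - c : ℝ) : ℂ)) (by rw [hexpA, Complex.exp_log hAne])
  obtain ⟨m2, hm2⟩ := exp_im_lattice (z := G (0, 1))
    (w := Complex.log ((b - c : ℝ) : ℂ)) (by rw [hexpB, Complex.exp_log hBne])
  have hargA : (Complex.log ((a - c : ℝ) : ℂ)).im = Real.pi := by
    rw [Complex.log_im]
    exact Complex.arg_ofReal_of_neg (by linarith)
  have hargB : (Complex.log ((b - c : ℝ) : ℂ)).im = 0 := by
    rw [Complex.log_im]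
    exact Complex.arg_ofReal_of_nonneg (by linarith)
  rw [hargA] at hm1
  rw [hargB] at hm2
  -- α = π + 2πm1, α' = 0 + 2πm2, α = α'  ⟹ contradiction
  have hπ := Real.pi_pos
  have : Real.pi * (2 * (m1 : ℝ) - 2 * (m2 : ℝ) + 1) = 0 := by
    rw [hm1, hm2] at hαα'
    nlinarith
  have h3 : (2 * (m1 : ℝ) - 2 * (m2 : ℝ) + 1) = 0 := by
    rcases mul_eq_zero.mp this with h | h
    · exact absurd h (ne_of_gt hπ)
    · exact h
  have h4 : (2 * m1 - 2 * m2 + 1 : ℤ) = 0 := by exact_mod_cast h3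
  omega
end
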